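/- arXiv:2210.03101 — 6 statements merged into one kernel-verified Lean document; each statement's English description precedes it below -/
import Mathlib

section
/- If w is an element of a Coxeter group W and s is a simple reflection with ℓ(ws) < ℓ(w), then for every y < w in Bruhat order the Kazhdan–Lusztig polynomials satisfy P_{ys,w} = P_{y,w}. -/
/-!
Write `X = ∑_x P_{x,w}(q) T_x`, so that `bar X = q^{-ℓ(w)} X`. Since
`bar (T_s - q) = q⁻¹ (T_s - q)`, the element `Z = X (T_s - q)` satisfies
`bar Z = q^{-ℓ(w)-1} Z`, and its coefficient at `T_x` is `P_{xs,w} - P_{x,w}` if `xs < x` and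
`q (P_{xs,w} - P_{x,w})` if `xs > x`. If `Z ≠ 0`, a nonzero coefficient at an `x` of maximal
length sits at a right descent `xs < x`. As `bar T_x ≡ q^{-ℓ(x)} T_x` modulo shorter basis
elements, that coefficient is symmetric about degree `ℓ(w) + 1 - ℓ(x)` in `v`, whereas the degree
bounds on Kazhdan–Lusztig polynomials and `ws < w` put it in degrees `≤ ℓ(w) - ℓ(x)`.
Hence `Z = 0`.

The sum defining `X` is finite because Bruhat intervals are; this follows from the strong exchange
condition for simple reflections, proved with the sign representation of `W` on `W × {±1}`.
-/

noncomputable section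

open LaurentPolynomial

variable {B W : Type*} [Group W] {M : CoxeterMatrix B} (cs : CoxeterSystem M W)

/-- The Bruhat order on a Coxeter group: `y ≤ w` iff some reduced word for `w` has a
sublist which is a reduced word for `y`. -/
def BruhatLE (y w : W) : Prop :=
  ∃ l l' : List B, cs.IsReduced l ∧ cs.wordProd l = w ∧
    l'.Sublist l ∧ cs.IsReduced l' ∧ cs.wordProd l' = y

namespace LaurentPolynomial

lemma coeff_T_mul (f : ℤ[T;T⁻¹]) (a n : ℤ) : (T a * f).coeff n = f.coeff (n - a) := by
  rw [T_mul, T, AddMonoidAlgebra.coeff_mul_single_apply, mul_one, sub_eq_add_neg]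

lemma coeff_mul_T (f : ℤ[T;T⁻¹]) (a n : ℤ) : (f * T a).coeff n = f.coeff (n - a) := by
  rw [← T_mul, coeff_T_mul]

/-- The identity `h` says that `f.coeff n = f.coeff (b - a - n)`. -/
lemma eq_zero_of_T_mul_eq_invert_mul_T {f : ℤ[T;T⁻¹]} {a b : ℤ}
    (h : T a * f = invert f * T b) (hf : ∀ n, f.coeff n ≠ 0 → 2 * n < b - a) : f = 0 := by
  ext n
  by_contra hn
  have hsymm : f.coeff n = f.coeff (b - a - n) := by
    have := congrArg (fun g => g.coeff (n + a)) h
    simp only [coeff_T_mul, coeff_mul_T, invert_apply, add_sub_cancel_right] at this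
    rwa [show -(n + a - b) = b - a - n by ring] at this
  have h₁ := hf n hn
  have h₂ := hf (b - a - n) (hsymm ▸ hn)
  omega

lemma aeval_T_two_eq_toLaurent_expand (p : Polynomial ℤ) :
    Polynomial.aeval (T 2 : ℤ[T;T⁻¹]) p = (Polynomial.expand ℤ 2 p).toLaurent := by
  suffices Polynomial.aeval (T 2 : ℤ[T;T⁻¹]) =
      Polynomial.toLaurentAlg.comp (Polynomial.expand ℤ 2) by
    rw [this, AlgHom.comp_apply, Polynomial.toLaurentAlg_apply]
  ext
  simp

lemma aeval_T_two_injective : Function.Injective (Polynomial.aeval (R := ℤ) (T 2 : ℤ[T;T⁻¹])) := by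
  intro p q h
  rw [aeval_T_two_eq_toLaurent_expand, aeval_T_two_eq_toLaurent_expand] at h
  exact Polynomial.expand_injective two_pos (Polynomial.toLaurent_injective h)

lemma le_two_mul_natDegree_of_coeff_aeval_T_two_ne_zero {p : Polynomial ℤ} {n : ℤ}
    (h : (Polynomial.aeval (T 2 : ℤ[T;T⁻¹]) p).coeff n ≠ 0) : n ≤ 2 * p.natDegree := by
  rw [aeval_T_two_eq_toLaurent_expand, ← Finsupp.mem_support_iff,
    support_coeff_toLaurent] at h
  obtain ⟨k, hk, rfl⟩ := Finset.mem_map.mp h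
  have := Polynomial.le_natDegree_of_mem_supp k hk
  rw [Polynomial.natDegree_expand] at this
  simp only [Nat.castEmbedding_apply]
  omega

end LaurentPolynomial

lemma List.count_eq_two_mul_count_take {α : Type*} [BEq α] (l : List α) (p : ℕ)
    (hl : l.length = 2 * p) (h : ∀ k (hk : k < p), l[p + k]'(by omega) = l[k]'(by omega))
    (a : α) : l.count a = 2 * (l.take p).count a := by
  have hdrop : l.drop p = l.take p := by
    apply List.ext_getElem (by simp; omega)
    intro k h₁ h₂
    simp only [List.getElem_drop, List.getElem_take]
    exact h k (by simp at h₂; omega)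
  conv_lhs => rw [← List.take_append_drop p l, List.count_append, hdrop]
  ring

namespace CoxeterSystem

local prefix:100 "π " => cs.wordProd
local prefix:100 "lis " => cs.leftInvSeq

lemma simple_mul_mul_simple_eq_simple_iff (i : B) (t : W) :
    cs.simple i * t * cs.simple i = cs.simple i ↔ t = cs.simple i := by
  constructor
  · intro h
    simpa [mul_assoc] using congrArg (fun u => cs.simple i * u * cs.simple i) h
  · rintro rfl
    simp

section SignRepresentation

variable [DecidableEq W]

def reflectionSignPerm (i : B) : Equiv.Perm (W × ℤˣ) :=
  Function.Involutive.toPerm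
    (fun p => (cs.simple i * p.1 * cs.simple i, (if p.1 = cs.simple i then -1 else 1) * p.2))
    (by
      rintro ⟨t, ε⟩
      simp only [simple_mul_mul_simple_eq_simple_iff]
      refine Prod.ext (by simp [mul_assoc]) ?_
      split_ifs <;> simp)

lemma count_leftInvSeq_cons (i : B) (ω : List B) (u : W) :
    (lis (i :: ω)).count (cs.simple i * u * cs.simple i) =
      (lis ω).count u + if u = cs.simple i then 1 else 0 := by
  have hsus : cs.simple i * u * cs.simple i = MulAut.conj (cs.simple i) u := by simp
  rw [hsus, leftInvSeq, List.count_cons,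
    List.count_map_of_injective _ _ (MulAut.conj _).injective, ← hsus]
  simp only [beq_iff_eq]
  exact congrArg _ (if_congr (eq_comm.trans (cs.simple_mul_mul_simple_eq_simple_iff i u)) rfl rfl)

lemma prod_map_reflectionSignPerm_apply (ω : List B) (t : W) (ε : ℤˣ) :
    (ω.map cs.reflectionSignPerm).prod (t, ε) =
      (π ω * t * (π ω)⁻¹, (-1) ^ (lis ω).count (π ω * t * (π ω)⁻¹) * ε) := by
  induction ω generalizing t ε with
  | nil => simp
  | cons i ω ih =>
    rw [List.map_cons, List.prod_cons, Equiv.Perm.mul_apply, ih]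
    set u := π ω * t * (π ω)⁻¹
    have hconj : π (i :: ω) * t * (π (i :: ω))⁻¹ = cs.simple i * u * cs.simple i := by
      simp [u, cs.wordProd_cons, mul_assoc]
    rw [hconj, count_leftInvSeq_cons]
    clear_value u
    by_cases hu : u = cs.simple i <;> simp [reflectionSignPerm, hu, pow_add, mul_comm]

lemma alternatingWord_two_mul_succ (i j : B) (n : ℕ) :
    alternatingWord i j (2 * (n + 1)) = i :: j :: alternatingWord i j (2 * n) := by
  rw [show 2 * (n + 1) = 2 * n + 1 + 1 by ring, alternatingWord_succ', alternatingWord_succ']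
  simp

lemma reflectionSignPerm_mul_pow (i j : B) (n : ℕ) :
    (cs.reflectionSignPerm i * cs.reflectionSignPerm j) ^ n =
      ((alternatingWord i j (2 * n)).map cs.reflectionSignPerm).prod := by
  induction n with
  | zero => simp [alternatingWord]
  | succ n ih => rw [pow_succ', ih, alternatingWord_two_mul_succ]; simp [mul_assoc]

lemma even_count_leftInvSeq_braidWord (i j : B) (t : W) :
    Even ((lis (alternatingWord i j (2 * M i j))).count t) := by
  rw [List.count_eq_two_mul_count_take _ (M i j) (by simp)]
  · exact even_two_mul _
  intro k hk
  rw [getElem_leftInvSeq_alternatingWord cs i j (M i j) k (by omega),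
    getElem_leftInvSeq_alternatingWord cs i j (M i j) (M i j + k) (by omega),
    prod_alternatingWord_eq_mul_pow, prod_alternatingWord_eq_mul_pow,
    show (2 * (M i j + k) + 1) / 2 = M i j + k by omega, show (2 * k + 1) / 2 = k by omega,
    pow_add, simple_mul_simple_pow', one_mul]
  simp

lemma isLiftable_reflectionSignPerm : CoxeterMatrix.IsLiftable M cs.reflectionSignPerm := by
  intro i j
  ext ⟨t, ε⟩ : 1
  rw [reflectionSignPerm_mul_pow, prod_map_reflectionSignPerm_apply,
    (even_count_leftInvSeq_braidWord cs i j _).neg_one_pow, prod_alternatingWord_eq_mul_pow]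
  simp

def reflectionSignRep : W →* Equiv.Perm (W × ℤˣ) :=
  cs.lift ⟨cs.reflectionSignPerm, cs.isLiftable_reflectionSignPerm⟩

lemma reflectionSignRep_wordProd (ω : List B) :
    cs.reflectionSignRep (π ω) = (ω.map cs.reflectionSignPerm).prod := by
  rw [wordProd, map_list_prod, List.map_map]
  congr 2
  ext1 i
  exact cs.lift_apply_simple cs.isLiftable_reflectionSignPerm i

lemma neg_one_pow_count_leftInvSeq_eq {ω ω' : List B} (h : π ω = π ω') (t : W) :
    (-1 : ℤˣ) ^ (lis ω).count t = (-1) ^ (lis ω').count t := by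
  have h₁ := cs.prod_map_reflectionSignPerm_apply ω ((π ω)⁻¹ * t * π ω) 1
  have h₂ := cs.prod_map_reflectionSignPerm_apply ω' ((π ω)⁻¹ * t * π ω) 1
  rw [← reflectionSignRep_wordProd] at h₁ h₂
  rw [← h, h₁] at h₂
  simpa [mul_assoc] using congrArg Prod.snd h₂

end SignRepresentation

theorem simple_mem_leftInvSeq_of_isLeftDescent {ω : List B} {i : B}
    (hi : cs.IsLeftDescent (π ω) i) : cs.simple i ∈ lis ω := by
  classical
  obtain ⟨κ, hκ, hκω⟩ := cs.exists_isReduced (cs.simple i * π ω)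
  have hnotmem : cs.simple i ∉ lis κ := fun hmem => by
    have := (cs.isLeftInversion_of_mem_leftInvSeq hκ hmem).2
    rw [← hκω, simple_mul_simple_cancel_left] at this
    exact lt_asymm hi this
  have hcount : (lis (i :: κ)).count (cs.simple i) = 1 := by
    have hcons := cs.count_leftInvSeq_cons i κ (cs.simple i)
    rwa [simple_mul_simple_self, one_mul, List.count_eq_zero_of_not_mem hnotmem,
      if_pos rfl] at hcons
  have hparity := cs.neg_one_pow_count_leftInvSeq_eq
    (by rw [wordProd_cons, ← hκω, simple_mul_simple_cancel_left] : π (i :: κ) = π ω) (cs.simple i)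
  by_contra hnm
  rw [hcount, List.count_eq_zero_of_not_mem hnm] at hparity
  exact absurd hparity (by decide)

end CoxeterSystem

lemma setOf_bruhatLE_subset {ω : List B} {w : W} (hω : cs.wordProd ω = w) :
    {y | BruhatLE cs y w} ⊆ insert w (⋃ t ∈ cs.leftInvSeq ω,
      ({y | BruhatLE cs y (t * w)} ∪ (t * ·) '' {y | BruhatLE cs y (t * w)})) := by
  rintro y ⟨_ | ⟨k, l⟩, l', hred, rfl, hsub, hred', rfl⟩
  · simp [List.sublist_nil.mp hsub]
  have hl : cs.IsReduced l := by simpa using hred.drop 1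
  have hkl : cs.simple k * cs.wordProd (k :: l) = cs.wordProd l := by
    rw [cs.wordProd_cons, cs.simple_mul_simple_cancel_left]
  have hdesc : cs.IsLeftDescent (cs.wordProd (k :: l)) k := by
    rw [CoxeterSystem.IsLeftDescent, hkl, hl, hred]
    simp
  refine Set.mem_insert_of_mem _ (Set.mem_biUnion
    (cs.simple_mem_leftInvSeq_of_isLeftDescent (hω ▸ hdesc)) ?_)
  rw [hkl]
  rcases List.sublist_cons_iff.mp hsub with hsub | ⟨r, rfl, hr⟩
  · exact Or.inl ⟨l, l', hl, rfl, hsub, hred', rfl⟩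
  · exact Or.inr ⟨cs.wordProd r, ⟨l, r, hl, rfl, hr, by simpa using hred'.drop 1, rfl⟩,
      (cs.wordProd_cons k r).symm⟩

lemma finite_setOf_bruhatLE (w : W) : {y | BruhatLE cs y w}.Finite := by
  induction hn : cs.length w using Nat.strong_induction_on generalizing w with
  | _ n ih =>
    obtain ⟨ω, hred, rfl⟩ := cs.exists_isReduced w
    refine ((List.finite_toSet _).biUnion fun t ht => ?_).insert _ |>.subset
      (setOf_bruhatLE_subset cs rfl)
    have hlt := (cs.isLeftInversion_of_mem_leftInvSeq hred ht).2
    have hfin := ih _ (hn ▸ hlt) _ rfl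
    exact hfin.union (hfin.image _)

lemma exists_finset_superset_mul_mem {G : Type*} [Group G] {S : Set G} (hS : S.Finite) (g : G)
    (hg : g * g = 1) : ∃ F : Finset G, S ⊆ F ∧ ∀ x ∈ F, x * g ∈ F := by
  classical
  refine ⟨hS.toFinset ∪ hS.toFinset.image (· * g), fun x hx => by simp [hx], fun x hx => ?_⟩
  simp only [Finset.mem_union, Finset.mem_image, Set.Finite.mem_toFinset] at hx ⊢
  rcases hx with hx | ⟨z, hz, rfl⟩
  · exact Or.inr ⟨x, hx, rfl⟩
  · exact Or.inl (by rwa [mul_assoc, hg, mul_one])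

section HeckeAlgebra

variable {H : Type*} [Ring H] [Algebra ℤ[T;T⁻¹] H] (Tb : W → H)

lemma bar_smul_eq_invert_smul {bar : H → H} (hbar_add : ∀ x y : H, bar (x + y) = bar x + bar y)
    (hbar_smul : ∀ (n : ℤ) (x : H), bar ((T n : ℤ[T;T⁻¹]) • x) = (T (-n) : ℤ[T;T⁻¹]) • bar x)
    (f : ℤ[T;T⁻¹]) (h : H) : bar (f • h) = invert f • bar h := by
  induction f using LaurentPolynomial.induction_on' with
  | add p q hp hq => rw [add_smul, hbar_add, hp, hq, map_add, add_smul]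
  | C_mul_T n a =>
    have hzsmul (z : H) : bar (a • z) = a • bar z := map_zsmul (AddMonoidHom.mk' bar hbar_add) a z
    rw [map_mul, invert_C, invert_T, mul_smul, mul_smul, eq_intCast C a, Int.cast_smul_eq_zsmul,
      Int.cast_smul_eq_zsmul, hzsmul, hbar_smul]

lemma bar_eq_of_bar_T_smul_eq {bar : H → H}
    (hbar_smul : ∀ (n : ℤ) (x : H), bar ((T n : ℤ[T;T⁻¹]) • x) = (T (-n) : ℤ[T;T⁻¹]) • bar x)
    {X : H} {n : ℤ} (h : bar ((T (-n) : ℤ[T;T⁻¹]) • X) = (T (-n) : ℤ[T;T⁻¹]) • X) :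
    bar X = (T (-(2 * n)) : ℤ[T;T⁻¹]) • X := by
  rw [hbar_smul, neg_neg] at h
  calc bar X = (T (-n) : ℤ[T;T⁻¹]) • (T n : ℤ[T;T⁻¹]) • bar X := by
        rw [smul_smul, ← T_add, neg_add_cancel, T_zero, one_smul]
    _ = (T (-(2 * n)) : ℤ[T;T⁻¹]) • X := by rw [h, smul_smul, ← T_add, ← two_mul, mul_neg]

def spanLengthLT (n : ℕ) : Submodule ℤ[T;T⁻¹] H :=
  Submodule.span ℤ[T;T⁻¹] (Tb '' {u | cs.length u < n})

lemma spanLengthLT_mono {m n : ℕ} (h : m ≤ n) : spanLengthLT cs Tb m ≤ spanLengthLT cs Tb n :=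
  Submodule.span_mono (Set.image_mono fun _ hu => lt_of_lt_of_le hu h)

lemma Tb_mem_spanLengthLT {u : W} {n : ℕ} (h : cs.length u < n) : Tb u ∈ spanLengthLT cs Tb n :=
  Submodule.subset_span (Set.mem_image_of_mem Tb h)

lemma mul_simple_mem_spanLengthLT
    (hTmul_asc : ∀ (w : W) (i : B), cs.length w < cs.length (w * cs.simple i) →
      Tb w * Tb (cs.simple i) = Tb (w * cs.simple i))
    (hTmul_desc : ∀ (w : W) (i : B), cs.length (w * cs.simple i) < cs.length w →
      Tb w * Tb (cs.simple i) =
        ((T 2 - 1 : ℤ[T;T⁻¹])) • Tb w + ((T 2 : ℤ[T;T⁻¹])) • Tb (w * cs.simple i))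
    {n : ℕ} {h : H} (hh : h ∈ spanLengthLT cs Tb n) (i : B) :
    h * Tb (cs.simple i) ∈ spanLengthLT cs Tb (n + 1) := by
  induction hh using Submodule.span_induction with
  | mem x hx =>
    obtain ⟨u, hu, rfl⟩ := hx
    have hu : cs.length u < n := hu
    rcases cs.length_mul_simple u i with hasc | hdesc
    · rw [hTmul_asc u i (by omega)]
      exact Tb_mem_spanLengthLT cs Tb (by omega)
    · rw [hTmul_desc u i (by omega)]
      exact add_mem (Submodule.smul_mem _ _ (Tb_mem_spanLengthLT cs Tb (by omega)))
        (Submodule.smul_mem _ _ (Tb_mem_spanLengthLT cs Tb (by omega)))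
  | zero => simp
  | add x y _ _ hx hy => rw [add_mul]; exact add_mem hx hy
  | smul a x _ hx => rw [smul_mul_assoc]; exact Submodule.smul_mem _ _ hx

lemma bar_Tb_sub_mem_spanLengthLT (hT1 : Tb 1 = 1)
    (hTmul_asc : ∀ (w : W) (i : B), cs.length w < cs.length (w * cs.simple i) →
      Tb w * Tb (cs.simple i) = Tb (w * cs.simple i))
    (hTmul_desc : ∀ (w : W) (i : B), cs.length (w * cs.simple i) < cs.length w →
      Tb w * Tb (cs.simple i) =
        ((T 2 - 1 : ℤ[T;T⁻¹])) • Tb w + ((T 2 : ℤ[T;T⁻¹])) • Tb (w * cs.simple i))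
    {bar : H → H} (hbar_mul : ∀ x y : H, bar (x * y) = bar x * bar y) (hbar_one : bar 1 = 1)
    (hbar_simple : ∀ i : B, bar (Tb (cs.simple i)) =
      (T (-2) : ℤ[T;T⁻¹]) • Tb (cs.simple i) + ((T (-2) - 1 : ℤ[T;T⁻¹])) • (1 : H))
    (x : W) :
    bar (Tb x) - (T (-(2 * (cs.length x : ℤ))) : ℤ[T;T⁻¹]) • Tb x ∈
      spanLengthLT cs Tb (cs.length x) := by
  induction hn : cs.length x using Nat.strong_induction_on generalizing x with | _ n ih
  subst hn
  rcases eq_or_ne x 1 with rfl | hx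
  · simp [hT1, hbar_one]
  obtain ⟨i, hi⟩ := cs.exists_rightDescent_of_ne_one hx
  set x₀ := x * cs.simple i
  have hlen : cs.length x₀ + 1 = cs.length x := cs.isRightDescent_iff.mp hi
  have hx₀s : x₀ * cs.simple i = x := cs.simple_mul_simple_cancel_right i
  have hTx : Tb x₀ * Tb (cs.simple i) = Tb x := by
    rw [hTmul_asc x₀ i (by rw [hx₀s]; omega), hx₀s]
  obtain ⟨r₀, hr₀, hbar₀⟩ : ∃ r₀ ∈ spanLengthLT cs Tb (cs.length x₀),
      bar (Tb x₀) = (T (-(2 * (cs.length x₀ : ℤ))) : ℤ[T;T⁻¹]) • Tb x₀ + r₀ :=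
    ⟨_, ih _ (by omega) x₀ rfl, by abel⟩
  have hTT : (T (-(2 * (cs.length x₀ : ℤ))) * T (-2) : ℤ[T;T⁻¹]) =
      T (-(2 * (cs.length x : ℤ))) := by
    rw [← T_add, ← hlen]
    push_cast
    ring_nf
  have hexp : bar (Tb x) - (T (-(2 * (cs.length x : ℤ))) : ℤ[T;T⁻¹]) • Tb x =
      ((T (-2) - 1 : ℤ[T;T⁻¹]) * T (-(2 * (cs.length x₀ : ℤ)))) • Tb x₀ +
        ((T (-2) : ℤ[T;T⁻¹]) • (r₀ * Tb (cs.simple i)) + (T (-2) - 1 : ℤ[T;T⁻¹]) • r₀) := by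
    rw [← hTx, hbar_mul, hbar_simple, hbar₀, hTx, ← hTT]
    simp only [add_mul, mul_add, smul_mul_assoc, mul_smul_comm, mul_one, hTx]
    module
  rw [hexp]
  refine add_mem (Submodule.smul_mem _ _ (Tb_mem_spanLengthLT cs Tb (by omega)))
    (add_mem (Submodule.smul_mem _ _ ?_) (Submodule.smul_mem _ _ ?_))
  · exact spanLengthLT_mono cs Tb hlen.le
      (mul_simple_mem_spanLengthLT cs Tb hTmul_asc hTmul_desc hr₀ i)
  · exact spanLengthLT_mono cs Tb (by omega) hr₀

lemma eq_zero_of_sum_smul_mem_spanLengthLT (hTindep : LinearIndependent ℤ[T;T⁻¹] Tb)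
    {G : Finset W} {d : W → ℤ[T;T⁻¹]} {n : ℕ} (h : ∑ x ∈ G, d x • Tb x ∈ spanLengthLT cs Tb n)
    {x₀ : W} (hx₀ : x₀ ∈ G) (hn : n ≤ cs.length x₀) : d x₀ = 0 := by
  classical
  obtain ⟨l, hl, hlc⟩ := (Finsupp.mem_span_image_iff_linearCombination _).mp h
  have hl_eq : l = ∑ x ∈ G, Finsupp.single x (d x) :=
    hTindep.finsuppLinearCombination_injective (by simp [hlc, map_sum])
  have hl₀ : l x₀ = 0 := (Finsupp.mem_supported' _ _).mp hl x₀ (by simpa using hn)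
  simpa [hl_eq, Finsupp.finsetSum_apply, Finsupp.single_apply, hx₀] using hl₀

lemma T_mul_eq_invert_mul_T_of_bar_eq (hTindep : LinearIndependent ℤ[T;T⁻¹] Tb) {bar : H → H}
    (hbar_add : ∀ x y : H, bar (x + y) = bar x + bar y)
    (hbar_smul : ∀ (n : ℤ) (x : H), bar ((T n : ℤ[T;T⁻¹]) • x) = (T (-n) : ℤ[T;T⁻¹]) • bar x)
    (hbarTb : ∀ x, bar (Tb x) - (T (-(2 * (cs.length x : ℤ))) : ℤ[T;T⁻¹]) • Tb x ∈
      spanLengthLT cs Tb (cs.length x))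
    {G : Finset W} {e : W → ℤ[T;T⁻¹]} {c : ℤ}
    (hbar : bar (∑ x ∈ G, e x • Tb x) = (T c : ℤ[T;T⁻¹]) • ∑ x ∈ G, e x • Tb x)
    {x₀ : W} (hx₀ : x₀ ∈ G) (hmax : ∀ x ∈ G, e x ≠ 0 → cs.length x ≤ cs.length x₀) :
    T c * e x₀ = invert (e x₀) * T (-(2 * (cs.length x₀ : ℤ))) := by
  have hsum : ∑ x ∈ G, (T c * e x - invert (e x) * T (-(2 * (cs.length x : ℤ)))) • Tb x =
      ∑ x ∈ G, invert (e x) • (bar (Tb x) - (T (-(2 * (cs.length x : ℤ))) : ℤ[T;T⁻¹]) • Tb x) := by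
    have hbar_sum : bar (∑ x ∈ G, e x • Tb x) = ∑ x ∈ G, invert (e x) • bar (Tb x) := by
      refine (map_sum (AddMonoidHom.mk' bar hbar_add) (fun x => e x • Tb x) G).trans ?_
      exact Finset.sum_congr rfl fun x _ => bar_smul_eq_invert_smul hbar_add hbar_smul _ _
    simp only [sub_smul, smul_sub, Finset.sum_sub_distrib, mul_smul, ← Finset.smul_sum, ← hbar,
      hbar_sum]
  refine sub_eq_zero.mp (eq_zero_of_sum_smul_mem_spanLengthLT cs Tb hTindep
    (d := fun x => T c * e x - invert (e x) * T (-(2 * (cs.length x : ℤ)))) ?_ hx₀ le_rfl)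
  rw [hsum]
  refine Submodule.sum_mem _ fun x hx => ?_
  by_cases hex : e x = 0
  · simp [hex]
  · exact Submodule.smul_mem _ _ (spanLengthLT_mono cs Tb (hmax x hx hex) (hbarTb x))

/-- By `T_mul_eq_invert_mul_T_of_bar_eq`, a top coefficient is symmetric about degree
`m - ℓ(x)`. -/
theorem eq_zero_of_bar_eq_of_coeff_lt (hTindep : LinearIndependent ℤ[T;T⁻¹] Tb) {bar : H → H}
    (hbar_add : ∀ x y : H, bar (x + y) = bar x + bar y)
    (hbar_smul : ∀ (n : ℤ) (x : H), bar ((T n : ℤ[T;T⁻¹]) • x) = (T (-n) : ℤ[T;T⁻¹]) • bar x)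
    (hbarTb : ∀ x, bar (Tb x) - (T (-(2 * (cs.length x : ℤ))) : ℤ[T;T⁻¹]) • Tb x ∈
      spanLengthLT cs Tb (cs.length x))
    {G : Finset W} {e : W → ℤ[T;T⁻¹]} {m : ℤ}
    (hbar : bar (∑ x ∈ G, e x • Tb x) = (T (-(2 * m)) : ℤ[T;T⁻¹]) • ∑ x ∈ G, e x • Tb x)
    (hcoeff : ∀ x ∈ G, (∀ x' ∈ G, e x' ≠ 0 → cs.length x' ≤ cs.length x) →
      ∀ n, (e x).coeff n ≠ 0 → n + cs.length x < m) :
    ∀ x ∈ G, e x = 0 := by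
  classical
  by_contra! hne
  obtain ⟨x₀, hx₀, hmax⟩ := (G.filter (e · ≠ 0)).exists_max_image cs.length
    (by simpa [Finset.filter_nonempty_iff] using hne)
  simp only [Finset.mem_filter] at hx₀ hmax
  have hmax' : ∀ x ∈ G, e x ≠ 0 → cs.length x ≤ cs.length x₀ := fun x hx hex => hmax x ⟨hx, hex⟩
  refine hx₀.2 (LaurentPolynomial.eq_zero_of_T_mul_eq_invert_mul_T
    (T_mul_eq_invert_mul_T_of_bar_eq cs Tb hTindep hbar_add hbar_smul hbarTb hbar hx₀.1 hmax')
    fun n hn => ?_)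
  have := hcoeff x₀ hx₀.1 hmax' n hn
  omega

def descentWeight (i : B) (x : W) : ℤ[T;T⁻¹] :=
  if cs.length (x * cs.simple i) < cs.length x then 1 else T 2

lemma descentWeight_ne_zero (i : B) (x : W) : descentWeight cs i x ≠ 0 := by
  unfold descentWeight
  split_ifs
  exacts [one_ne_zero, (isUnit_T 2).ne_zero]

/-- The coefficient of `T_x` in `(∑_y a_y T_y) (T_s - q)`, see `sum_smul_mul_simple_sub`. -/
def coeffMulSimpleSub (i : B) (a : W → ℤ[T;T⁻¹]) (x : W) : ℤ[T;T⁻¹] :=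
  descentWeight cs i x * (a (x * cs.simple i) - a x)

lemma Tb_mul_simple_sub
    (hTmul_asc : ∀ (w : W) (i : B), cs.length w < cs.length (w * cs.simple i) →
      Tb w * Tb (cs.simple i) = Tb (w * cs.simple i))
    (hTmul_desc : ∀ (w : W) (i : B), cs.length (w * cs.simple i) < cs.length w →
      Tb w * Tb (cs.simple i) =
        ((T 2 - 1 : ℤ[T;T⁻¹])) • Tb w + ((T 2 : ℤ[T;T⁻¹])) • Tb (w * cs.simple i))
    (x : W) (i : B) :
    Tb x * (Tb (cs.simple i) - (T 2 : ℤ[T;T⁻¹]) • 1) =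
      descentWeight cs i (x * cs.simple i) • Tb (x * cs.simple i) -
        descentWeight cs i x • Tb x := by
  rw [mul_sub, mul_smul_comm, mul_one]
  simp only [descentWeight, cs.simple_mul_simple_cancel_right]
  rcases cs.length_mul_simple x i with h | h
  · rw [hTmul_asc x i (by omega), if_pos (by omega), if_neg (by omega), one_smul]
  · rw [hTmul_desc x i (by omega), if_neg (by omega), if_pos (by omega), one_smul]
    module

lemma sum_smul_mul_simple_sub
    (hTmul_asc : ∀ (w : W) (i : B), cs.length w < cs.length (w * cs.simple i) →
      Tb w * Tb (cs.simple i) = Tb (w * cs.simple i))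
    (hTmul_desc : ∀ (w : W) (i : B), cs.length (w * cs.simple i) < cs.length w →
      Tb w * Tb (cs.simple i) =
        ((T 2 - 1 : ℤ[T;T⁻¹])) • Tb w + ((T 2 : ℤ[T;T⁻¹])) • Tb (w * cs.simple i))
    (i : B) {G : Finset W} (hG : ∀ x ∈ G, x * cs.simple i ∈ G) (a : W → ℤ[T;T⁻¹]) :
    (∑ x ∈ G, a x • Tb x) * (Tb (cs.simple i) - (T 2 : ℤ[T;T⁻¹]) • 1) =
      ∑ x ∈ G, coeffMulSimpleSub cs i a x • Tb x := by
  have hreindex : ∑ x ∈ G, (a x * descentWeight cs i (x * cs.simple i)) • Tb (x * cs.simple i) =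
      ∑ x ∈ G, (a (x * cs.simple i) * descentWeight cs i x) • Tb x :=
    Finset.sum_nbij' (· * cs.simple i) (· * cs.simple i) hG hG
      (fun x _ => cs.simple_mul_simple_cancel_right i)
      (fun x _ => cs.simple_mul_simple_cancel_right i)
      (fun x _ => by simp only [cs.simple_mul_simple_cancel_right])
  calc (∑ x ∈ G, a x • Tb x) * (Tb (cs.simple i) - (T 2 : ℤ[T;T⁻¹]) • 1)
      = ∑ x ∈ G, (a x * descentWeight cs i (x * cs.simple i)) • Tb (x * cs.simple i) -
          ∑ x ∈ G, (a x * descentWeight cs i x) • Tb x := by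
        rw [Finset.sum_mul, ← Finset.sum_sub_distrib]
        refine Finset.sum_congr rfl fun x _ => ?_
        rw [smul_mul_assoc, Tb_mul_simple_sub cs Tb hTmul_asc hTmul_desc, smul_sub, smul_smul,
          smul_smul]
    _ = ∑ x ∈ G, coeffMulSimpleSub cs i a x • Tb x := by
        rw [hreindex, ← Finset.sum_sub_distrib]
        refine Finset.sum_congr rfl fun x _ => ?_
        rw [coeffMulSimpleSub, ← sub_smul, mul_sub, mul_comm, mul_comm (a x)]

lemma bar_mul_simple_sub {bar : H → H}
    (hbar_add : ∀ x y : H, bar (x + y) = bar x + bar y)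
    (hbar_mul : ∀ x y : H, bar (x * y) = bar x * bar y) (hbar_one : bar 1 = 1)
    (hbar_smul : ∀ (n : ℤ) (x : H), bar ((T n : ℤ[T;T⁻¹]) • x) = (T (-n) : ℤ[T;T⁻¹]) • bar x)
    (hbar_simple : ∀ i : B, bar (Tb (cs.simple i)) =
      (T (-2) : ℤ[T;T⁻¹]) • Tb (cs.simple i) + ((T (-2) - 1 : ℤ[T;T⁻¹])) • (1 : H))
    (i : B) {X : H} {m : ℤ} (hX : bar X = (T (-(2 * m)) : ℤ[T;T⁻¹]) • X) :
    bar (X * (Tb (cs.simple i) - (T 2 : ℤ[T;T⁻¹]) • 1)) =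
      (T (-(2 * (m + 1))) : ℤ[T;T⁻¹]) • (X * (Tb (cs.simple i) - (T 2 : ℤ[T;T⁻¹]) • 1)) := by
  have hbar_sub (x y : H) : bar (x - y) = bar x - bar y :=
    map_sub (AddMonoidHom.mk' bar hbar_add) x y
  have hsimple : bar (Tb (cs.simple i) - (T 2 : ℤ[T;T⁻¹]) • 1) =
      (T (-2) : ℤ[T;T⁻¹]) • (Tb (cs.simple i) - (T 2 : ℤ[T;T⁻¹]) • 1) := by
    rw [hbar_sub, hbar_simple, hbar_smul, hbar_one, smul_sub, smul_smul, ← T_add,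
      show (-2 + 2 : ℤ) = 0 by norm_num, T_zero]
    module
  rw [hbar_mul, hX, hsimple, smul_mul_smul_comm, ← T_add]
  ring_nf

end HeckeAlgebra

lemma add_length_lt_of_coeff_aeval_ne_zero {P : W → W → Polynomial ℤ}
    (hPsupp : ∀ y w : W, ¬ BruhatLE cs y w → P y w = 0)
    (hPdeg : ∀ y w : W, BruhatLE cs y w → y ≠ w →
      2 * (P y w).natDegree + 1 ≤ (cs.length w : ℤ) - (cs.length y : ℤ))
    {z w : W} (hzw : z ≠ w) {n : ℤ}
    (hn : (Polynomial.aeval (T 2 : ℤ[T;T⁻¹]) (P z w)).coeff n ≠ 0) :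
    n + cs.length z < cs.length w := by
  have hP : P z w ≠ 0 := fun h => hn (by simp [h])
  have := hPdeg z w (not_not.mp (mt (hPsupp z w) hP)) hzw
  have := LaurentPolynomial.le_two_mul_natDegree_of_coeff_aeval_T_two_ne_zero hn
  omega

/-- A top coefficient sits at a right descent `xs < x` of its index, where the bounds on `a`
apply to both `a (x * s)` and `a x`. -/
lemma coeff_coeffMulSimpleSub_lt {a : W → ℤ[T;T⁻¹]} {w : W} {i : B}
    (hw : cs.length (w * cs.simple i) < cs.length w) (ha_w : a w = 1)
    (ha : ∀ z ≠ w, ∀ n, (a z).coeff n ≠ 0 → n + cs.length z < cs.length w)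
    {G : Finset W} (hG : ∀ x ∈ G, x * cs.simple i ∈ G) {x : W} (hx : x ∈ G)
    (hmax : ∀ x' ∈ G, coeffMulSimpleSub cs i a x' ≠ 0 → cs.length x' ≤ cs.length x)
    {n : ℤ} (hn : (coeffMulSimpleSub cs i a x).coeff n ≠ 0) :
    n + cs.length x < cs.length w + 1 := by
  have hdesc : cs.length (x * cs.simple i) < cs.length x := by
    by_contra hasc
    have hlen : cs.length (x * cs.simple i) = cs.length x + 1 :=
      (cs.length_mul_simple x i).resolve_right (by omega)
    have hne : coeffMulSimpleSub cs i a (x * cs.simple i) ≠ 0 := by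
      have hx_ne : coeffMulSimpleSub cs i a x ≠ 0 := fun h => hn (by simp [h])
      simp only [coeffMulSimpleSub, descentWeight, cs.simple_mul_simple_cancel_right, if_neg hasc,
        if_pos (show cs.length x < cs.length (x * cs.simple i) by omega), one_mul] at hx_ne ⊢
      exact fun h => hx_ne (by rw [← neg_sub, h, neg_zero, mul_zero])
    have := hmax _ (hG x hx) hne
    omega
  have hxw : x * cs.simple i ≠ w := by
    rintro rfl
    rw [cs.simple_mul_simple_cancel_right] at hw
    omega
  have hlen : cs.length (x * cs.simple i) + 1 = cs.length x := cs.isRightDescent_iff.mp hdesc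
  rw [coeffMulSimpleSub, descentWeight, if_pos hdesc, one_mul, AddMonoidAlgebra.coeff_sub,
    Finsupp.sub_apply] at hn
  by_cases hxs : (a (x * cs.simple i)).coeff n = 0
  · rw [hxs, zero_sub, neg_ne_zero] at hn
    rcases eq_or_ne x w with rfl | hxw'
    · rw [ha_w, ← T_zero, T_apply] at hn
      have : n = 0 := by by_contra h; exact hn (if_neg (Ne.symm h))
      omega
    · have := ha x hxw' n hn
      omega
  · have := ha _ hxw n hxs
    omega

/-- The Hecke algebra `H` over `ℤ[v,v⁻¹]`, with `v = T 1` and `q = T 2`, and the Kazhdan–Lusztig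
polynomials are given by their defining properties. -/
theorem kl_polynomial_right_descent_invariance
    (H : Type*) [Ring H] [Algebra (LaurentPolynomial ℤ) H]
    (Tb : W → H)
    (hT1 : Tb 1 = 1)
    (hTindep : LinearIndependent (LaurentPolynomial ℤ) Tb)
    (hTmul_asc : ∀ (w : W) (i : B), cs.length w < cs.length (w * cs.simple i) →
      Tb w * Tb (cs.simple i) = Tb (w * cs.simple i))
    (hTmul_desc : ∀ (w : W) (i : B), cs.length (w * cs.simple i) < cs.length w →
      Tb w * Tb (cs.simple i) =
        ((T 2 - 1 : LaurentPolynomial ℤ)) • Tb w +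
          ((T 2 : LaurentPolynomial ℤ)) • Tb (w * cs.simple i))
    (bar : H → H)
    (hbar_add : ∀ x y : H, bar (x + y) = bar x + bar y)
    (hbar_mul : ∀ x y : H, bar (x * y) = bar x * bar y)
    (hbar_one : bar 1 = 1)
    (hbar_smul : ∀ (n : ℤ) (x : H),
      bar ((T n : LaurentPolynomial ℤ) • x) = (T (-n) : LaurentPolynomial ℤ) • bar x)
    (hbar_simple : ∀ i : B,
      bar (Tb (cs.simple i)) =
        (T (-2) : LaurentPolynomial ℤ) • Tb (cs.simple i) +
          ((T (-2) - 1 : LaurentPolynomial ℤ)) • (1 : H))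
    (P : W → W → Polynomial ℤ)
    (hPww : ∀ w : W, P w w = 1)
    (hPsupp : ∀ y w : W, ¬ BruhatLE cs y w → P y w = 0)
    (hPdeg : ∀ y w : W, BruhatLE cs y w → y ≠ w →
      2 * (P y w).natDegree + 1 ≤ (cs.length w : ℤ) - (cs.length y : ℤ))
    (hbarC : ∀ w : W,
      bar ((T (-(cs.length w : ℤ)) : LaurentPolynomial ℤ) •
          ∑ᶠ x : W, (Polynomial.aeval (T 2 : LaurentPolynomial ℤ) (P x w)) • Tb x) =
        (T (-(cs.length w : ℤ)) : LaurentPolynomial ℤ) •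
          ∑ᶠ x : W, (Polynomial.aeval (T 2 : LaurentPolynomial ℤ) (P x w)) • Tb x)
    (w : W) (i : B) (hdesc : cs.length (w * cs.simple i) < cs.length w)
    (y : W) :
    P (y * cs.simple i) w = P y w := by
  classical
  set a : W → ℤ[T;T⁻¹] := fun x => Polynomial.aeval (T 2 : ℤ[T;T⁻¹]) (P x w)
  obtain ⟨G, hSG, hG⟩ := exists_finset_superset_mul_mem ((finite_setOf_bruhatLE cs w).insert y)
    (cs.simple i) (cs.simple_mul_simple_self i)
  have hsum : ∑ᶠ x, a x • Tb x = ∑ x ∈ G, a x • Tb x :=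
    finsum_eq_sum_of_support_subset _ fun x hx => hSG (Set.mem_insert_of_mem _
      (by_contra fun hxw => hx (by simp [a, hPsupp x w hxw])))
  have hX := bar_eq_of_bar_T_smul_eq hbar_smul (hsum ▸ hbarC w)
  have hZ := bar_mul_simple_sub cs Tb hbar_add hbar_mul hbar_one hbar_smul hbar_simple i hX
  rw [sum_smul_mul_simple_sub cs Tb hTmul_asc hTmul_desc i hG a] at hZ
  have hvanish := eq_zero_of_bar_eq_of_coeff_lt cs Tb hTindep hbar_add hbar_smul
    (bar_Tb_sub_mem_spanLengthLT cs Tb hT1 hTmul_asc hTmul_desc hbar_mul hbar_one hbar_simple) hZ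
    fun x hx hmax _ hn => coeff_coeffMulSimpleSub_lt cs hdesc (by simp [hPww])
      (fun _ hzw _ => add_length_lt_of_coeff_aeval_ne_zero cs hPsupp hPdeg hzw) hG hx hmax hn
  have hy := hvanish y (hSG (Set.mem_insert y _))
  rw [coeffMulSimpleSub, mul_eq_zero, sub_eq_zero] at hy
  exact LaurentPolynomial.aeval_T_two_injective (hy.resolve_left (descentWeight_ne_zero cs i y))

end
end

section
/- For any finite Coxeter group W, the sum over w ∈ W of the number of cosets |P(w)\W| equals the number of pairs (u,z) ∈ W × W such that there is no simple reflection s with both ℓ(us) > ℓ(u) and ℓ(sz) < ℓ(z). -/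
/-!
Each right coset of a standard parabolic subgroup `W_J` contains exactly one element `z` with
`ℓ(s_i z) > ℓ(z)` for all `i ∈ J`, namely its element of minimal length, so the index of `W_J`
counts these `z`; summing over `w`, with `J` the set of right ascents of `w`, counts the pairs.

Uniqueness of that element rests on the exchange condition, which follows from Tits' sign
representation: `s_i` acts on `W × {±1}` by `(x, ε) ↦ (s_i x s_i, ±ε)`, the sign flipping exactly
when `x = s_i`. Hence the parity of the number of occurrences of `t` in the left inversion sequence
of a word depends only on the product `w` of the word, and it changes when `w` is replaced by
`t w` for a reflection `t`. So a left inversion of `w` occurs in every word for `w`.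
-/

namespace CoxeterSystem

variable {B W : Type*} [Group W] {M : CoxeterMatrix B} (cs : CoxeterSystem M W)

local prefix:100 "s" => cs.simple
local prefix:100 "π" => cs.wordProd
local prefix:100 "ℓ" => cs.length
local prefix:100 "lis " => cs.leftInvSeq

open scoped Classical

section SignRepresentation

noncomputable def signedConj (i : B) : Equiv.Perm (W × ℤˣ) :=
  Function.Involutive.toPerm (fun p => (s i * p.1 * s i, if p.1 = s i then -p.2 else p.2)) <| by
    rintro ⟨x, ε⟩
    by_cases hx : x = s i
    · simp [hx]
    · simp [hx, mul_assoc, mul_eq_one_iff_eq_inv]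

theorem signedConj_apply (i : B) (x : W) (ε : ℤˣ) :
    cs.signedConj i (x, ε) = (s i * x * s i, if x = s i then -ε else ε) := rfl

theorem prod_map_signedConj_apply (ω : List B) (x : W) (ε : ℤˣ) :
    (ω.map cs.signedConj).prod (x, ε) =
      (π ω * x * (π ω)⁻¹, (-1) ^ (lis ω).count (π ω * x * (π ω)⁻¹) * ε) := by
  induction ω with
  | nil => simp
  | cons i ω ih =>
    set y := π ω * x * (π ω)⁻¹
    have hy : π (i :: ω) * x * (π (i :: ω))⁻¹ = MulAut.conj (s i) y := by
      simp [y, wordProd_cons, mul_assoc]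
    rw [List.map_cons, List.prod_cons, Equiv.Perm.mul_apply, ih, signedConj_apply, hy,
      leftInvSeq, List.count_cons, List.count_map_of_injective _ _ (MulAut.conj (s i)).injective]
    by_cases hyi : y = s i
    · simp [hyi, pow_succ]
    · simp [hyi, mul_eq_one_iff_inv_eq, Ne.symm hyi]

theorem prod_map_alternatingWord_two_mul {G : Type*} [Monoid G] (f : B → G) (i i' : B) (m : ℕ) :
    ((alternatingWord i i' (2 * m)).map f).prod = (f i * f i') ^ m := by
  induction m with
  | zero => simp [alternatingWord]
  | succ m ih =>
    rw [show 2 * (m + 1) = 2 * m + 1 + 1 by ring, alternatingWord_succ', alternatingWord_succ']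
    simp [ih, pow_succ', parity_simps, mul_assoc]

theorem leftInvSeq_alternatingWord_two_mul (i i' : B) (m : ℕ) :
    lis (alternatingWord i i' (2 * m)) =
      (List.range (2 * m)).map (fun k => s i * (s i' * s i) ^ k) := by
  refine List.ext_getElem (by simp) fun k hk _ => ?_
  rw [getElem_leftInvSeq_alternatingWord _ _ _ _ _ (by simpa using hk),
    prod_alternatingWord_eq_mul_pow]
  simp [parity_simps, show (2 * k + 1) / 2 = k by omega]

theorem even_count_leftInvSeq_alternatingWord (i i' : B) (x : W) :
    Even ((lis (alternatingWord i i' (2 * M i i'))).count x) := by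
  have hperiod : ∀ k, s i * (s i' * s i) ^ (M i i' + k) = s i * (s i' * s i) ^ k := by
    simp [pow_add]
  rw [leftInvSeq_alternatingWord_two_mul, two_mul, List.range_add, List.map_append, List.map_map,
    List.count_append]
  simp only [Function.comp_def, hperiod]
  exact ⟨_, rfl⟩

theorem isLiftable_signedConj : M.IsLiftable cs.signedConj := by
  intro i i'
  rw [← prod_map_alternatingWord_two_mul]
  ext ⟨x, ε⟩ <;>
  simp [prod_map_signedConj_apply, prod_alternatingWord_eq_mul_pow,
    (cs.even_count_leftInvSeq_alternatingWord i i' x).neg_one_pow]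

noncomputable def signRep : W →* Equiv.Perm (W × ℤˣ) :=
  cs.lift ⟨cs.signedConj, cs.isLiftable_signedConj⟩

theorem signRep_simple (i : B) : cs.signRep (s i) = cs.signedConj i :=
  cs.lift_apply_simple cs.isLiftable_signedConj i

theorem signRep_wordProd (ω : List B) : cs.signRep (π ω) = (ω.map cs.signedConj).prod := by
  rw [wordProd, map_list_prod, List.map_map]
  congr 2
  exact funext cs.signRep_simple

theorem signRep_apply (w x : W) (ε : ℤˣ) :
    cs.signRep w (x, ε) = (w * x * w⁻¹, (cs.signRep w (x, 1)).2 * ε) := by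
  obtain ⟨ω, rfl⟩ := cs.wordProd_surjective w
  simp [signRep_wordProd, prod_map_signedConj_apply]

theorem signRep_apply_self_of_isReflection {t : W} (ht : cs.IsReflection t) (ε : ℤˣ) :
    cs.signRep t (t, ε) = (t, -ε) := by
  obtain ⟨w, i, rfl⟩ := ht
  have hinv : cs.signRep w (cs.signRep w⁻¹ (w * s i * w⁻¹, ε)) = (w * s i * w⁻¹, ε) := by
    rw [← Equiv.Perm.mul_apply, ← map_mul, mul_inv_cancel, map_one, Equiv.Perm.one_apply]
  have hconj : w⁻¹ * (w * s i * w⁻¹) * w⁻¹⁻¹ = s i := by group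
  rw [signRep_apply cs w⁻¹, hconj, signRep_apply cs w, Prod.mk.injEq] at hinv
  rw [map_mul, map_mul, Equiv.Perm.mul_apply, Equiv.Perm.mul_apply, signRep_apply cs w⁻¹, hconj,
    signRep_simple, signedConj_apply, if_pos rfl, simple_mul_simple_self, one_mul,
    signRep_apply cs w, mul_neg, hinv.2]

noncomputable def inversionSign (w t : W) : ℤˣ := (cs.signRep w (w⁻¹ * t * w, 1)).2

theorem inversionSign_wordProd (ω : List B) (t : W) :
    cs.inversionSign (π ω) t = (-1) ^ (lis ω).count t := by
  simp [inversionSign, signRep_wordProd, prod_map_signedConj_apply, mul_assoc]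

theorem inversionSign_mul_left {t : W} (ht : cs.IsReflection t) (w : W) :
    cs.inversionSign (t * w) t = -cs.inversionSign w t := by
  have hconj : (t * w)⁻¹ * t * (t * w) = w⁻¹ * t * w := by
    rw [← ht.inv]
    group
  rw [inversionSign, hconj, map_mul, Equiv.Perm.mul_apply, signRep_apply cs w,
    show w * (w⁻¹ * t * w) * w⁻¹ = t by group, signRep_apply_self_of_isReflection cs ht,
    mul_one]
  rfl

end SignRepresentation

theorem mem_leftInvSeq_of_isLeftInversion {ω : List B} {t : W}
    (ht : cs.IsLeftInversion (π ω) t) : t ∈ lis ω := by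
  by_contra hmem
  obtain ⟨κ, hκ, hκπ⟩ := cs.exists_isReduced (t * π ω)
  have hsign : cs.inversionSign (t * π ω) t = -1 := by
    rw [inversionSign_mul_left cs ht.1, inversionSign_wordProd,
      List.count_eq_zero_of_not_mem hmem, pow_zero]
  rw [hκπ, inversionSign_wordProd] at hsign
  have htκ : t ∈ lis κ :=
    List.count_pos_iff.mp (Nat.pos_of_ne_zero fun h => by simp [h] at hsign)
  have hlt := (cs.isLeftInversion_of_mem_leftInvSeq hκ htκ).2
  rw [← hκπ, ← mul_assoc, ht.1.mul_self, one_mul] at hlt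
  exact lt_asymm hlt ht.2

theorem exists_eraseIdx_of_isLeftDescent {ω : List B} {i : B}
    (hi : cs.IsLeftDescent (π ω) i) : ∃ j < ω.length, s i * π ω = π (ω.eraseIdx j) := by
  obtain ⟨j, hj, hji⟩ := List.mem_iff_getElem.mp
    (cs.mem_leftInvSeq_of_isLeftInversion ⟨cs.isReflection_simple i, hi⟩)
  refine ⟨j, by simpa using hj, ?_⟩
  rw [← hji, ← List.getD_eq_getElem _ 1, getD_leftInvSeq_mul_wordProd]

def parabolicSubgroup (J : Set B) : Subgroup W := Subgroup.closure (cs.simple '' J)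

section Parabolic

variable {cs} {J : Set B}

theorem simple_mem_parabolicSubgroup {i : B} (hi : i ∈ J) : s i ∈ cs.parabolicSubgroup J :=
  Subgroup.subset_closure ⟨i, hi, rfl⟩

theorem exists_length_simple_mul_mul_eq {z : W}
    (hz : ∀ p ∈ cs.parabolicSubgroup J, ℓ z ≤ ℓ (p * z)) {i : B} (hi : i ∈ J) {τ : List B}
    (hτJ : ∀ a ∈ τ, a ∈ J) (hτ : π τ ∈ cs.parabolicSubgroup J)
    (hlen : ℓ (π τ * z) = τ.length + ℓ z) :
    ∃ ω : List B, (∀ a ∈ ω, a ∈ J) ∧ π ω = s i * π τ ∧ ℓ (s i * π τ * z) = ω.length + ℓ z := by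
  obtain ⟨ζ, hζ, rfl⟩ := cs.exists_isReduced z
  rcases cs.length_simple_mul (π τ * π ζ) i with hup | hdown
  · refine ⟨i :: τ, ?_, cs.wordProd_cons i τ, ?_⟩
    · simpa [hi] using hτJ
    · rw [mul_assoc, hup, hlen, List.length_cons]
      ring
  have hdesc : cs.IsLeftDescent (π (τ ++ ζ)) i := by
    rw [IsLeftDescent, wordProd_append]
    omega
  obtain ⟨j, hj, hji⟩ := cs.exists_eraseIdx_of_isLeftDescent hdesc
  rw [wordProd_append, ← mul_assoc] at hji
  rcases lt_or_ge j τ.length with hjτ | hjτ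
  · rw [List.eraseIdx_append_of_lt_length hjτ, wordProd_append] at hji
    refine ⟨τ.eraseIdx j, fun a ha => hτJ a (List.mem_of_mem_eraseIdx ha),
      (mul_right_cancel hji).symm, ?_⟩
    have := List.length_eraseIdx_add_one hjτ
    rw [mul_assoc]
    omega
  · -- the deleted letter lies in `ζ`, so `(π τ)⁻¹ * s i * π τ ∈ W_J` shortens `z`
    exfalso
    rw [List.eraseIdx_append_of_length_le hjτ, wordProd_append] at hji
    have hconj : (π τ)⁻¹ * s i * π τ ∈ cs.parabolicSubgroup J :=
      mul_mem (mul_mem (inv_mem hτ) (simple_mem_parabolicSubgroup hi)) hτ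
    have hle := hz _ hconj
    rw [mul_assoc, mul_assoc, ← mul_assoc (s i), hji, inv_mul_cancel_left] at hle
    have := cs.length_wordProd_le (ζ.eraseIdx (j - τ.length))
    have := List.length_eraseIdx_add_one (l := ζ) (i := j - τ.length)
      (by simp at hj; omega)
    rw [hζ] at hle
    omega

theorem exists_length_mul_eq_of_minimal {z : W}
    (hz : ∀ p ∈ cs.parabolicSubgroup J, ℓ z ≤ ℓ (p * z)) {q : W}
    (hq : q ∈ cs.parabolicSubgroup J) :
    ∃ ω : List B, (∀ a ∈ ω, a ∈ J) ∧ π ω = q ∧ ℓ (q * z) = ω.length + ℓ z := by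
  induction hq using Subgroup.closure_induction_left with
  | one => exact ⟨[], by simp, cs.wordProd_nil, by simp⟩
  | mul_left x hx y hy ih =>
    obtain ⟨i, hi, rfl⟩ := hx
    obtain ⟨τ, hτJ, rfl, hlen⟩ := ih
    exact exists_length_simple_mul_mul_eq hz hi hτJ hy hlen
  | inv_mul_cancel x hx y hy ih =>
    obtain ⟨i, hi, rfl⟩ := hx
    obtain ⟨τ, hτJ, rfl, hlen⟩ := ih
    rw [inv_simple]
    exact exists_length_simple_mul_mul_eq hz hi hτJ hy hlen

theorem eq_one_of_minimal {z : W} (hz : ∀ p ∈ cs.parabolicSubgroup J, ℓ z ≤ ℓ (p * z))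
    {p : W} (hp : p ∈ cs.parabolicSubgroup J) (hpz : ∀ i ∈ J, ℓ (p * z) < ℓ (s i * (p * z))) :
    p = 1 := by
  obtain ⟨_ | ⟨a, ω⟩, hωJ, rfl, hlen⟩ := cs.exists_length_mul_eq_of_minimal hz hp
  · rfl
  · have hasc := hpz a (hωJ a List.mem_cons_self)
    rw [wordProd_cons, mul_assoc, simple_mul_simple_cancel_left] at hasc
    have := cs.length_mul_le (π ω) z
    have := cs.length_wordProd_le ω
    rw [wordProd_cons, mul_assoc, List.length_cons] at hlen
    omega

theorem exists_minimal_mul (g : W) :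
    ∃ q ∈ cs.parabolicSubgroup J, ∀ p ∈ cs.parabolicSubgroup J, ℓ (q * g) ≤ ℓ (p * (q * g)) := by
  obtain ⟨q, hq, hmin⟩ := (InvImage.wf (fun q => ℓ (q * g)) wellFounded_lt).has_min
    (cs.parabolicSubgroup J : Set W) ⟨1, one_mem _⟩
  refine ⟨q, hq, fun p hp => ?_⟩
  rw [← mul_assoc]
  exact not_lt.mp (hmin _ (mul_mem hp hq))

theorem forall_length_le_mul_iff (z : W) :
    (∀ p ∈ cs.parabolicSubgroup J, ℓ z ≤ ℓ (p * z)) ↔ ∀ i ∈ J, ℓ z < ℓ (s i * z) := by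
  refine ⟨fun hz i hi => ?_, fun hz => ?_⟩
  · exact (hz _ (simple_mem_parabolicSubgroup hi)).lt_of_ne (cs.length_simple_mul_ne z i).symm
  · obtain ⟨q, hq, hmin⟩ := cs.exists_minimal_mul (J := J) z
    have hq1 : q⁻¹ = 1 := eq_one_of_minimal hmin (inv_mem hq) (by simpa using hz)
    simpa [inv_eq_one.mp hq1] using hmin

theorem index_parabolicSubgroup (J : Set B) :
    (cs.parabolicSubgroup J).index = Nat.card {z : W // ∀ i ∈ J, ℓ z < ℓ (s i * z)} := by
  rw [Subgroup.index, ← Nat.card_congr (QuotientGroup.quotientRightRelEquivQuotientLeftRel _)]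
  refine (Nat.card_congr (Equiv.ofBijective (fun z => Quotient.mk'' z.1) ⟨?_, ?_⟩)).symm
  · rintro ⟨z, hz⟩ ⟨z', hz'⟩ h
    have hrel : z' * z⁻¹ ∈ cs.parabolicSubgroup J :=
      QuotientGroup.rightRel_apply.mp (Quotient.exact' h)
    have h1 := eq_one_of_minimal ((forall_length_le_mul_iff z).mpr hz) hrel (by simpa using hz')
    exact Subtype.ext (mul_inv_eq_one.mp h1).symm
  · rintro ⟨g⟩
    obtain ⟨q, hq, hmin⟩ := cs.exists_minimal_mul (J := J) g
    refine ⟨⟨q * g, (forall_length_le_mul_iff _).mp hmin⟩, Quotient.sound' ?_⟩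
    rw [QuotientGroup.rightRel_apply, mul_inv_rev, mul_inv_cancel_left]
    exact inv_mem hq

end Parabolic

end CoxeterSystem

/-- For a finite Coxeter system `(W,S)`, `∑_{w ∈ W} |P(w)\W|` (where `P(w)` is the
standard parabolic subgroup generated by the simple reflections `s` with
`ℓ(ws) > ℓ(w)`, and the number of right cosets of `P(w)` in `W` is its index)
equals the number of pairs `(u,z) ∈ W × W` such that there is no simple reflection
`s` with both `ℓ(us) > ℓ(u)` and `ℓ(sz) < ℓ(z)`. -/
theorem sum_index_parabolic_eq_card_pairs
    {B W : Type*} [Group W] {M : CoxeterMatrix B} (cs : CoxeterSystem M W)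
    [Fintype W] :
    ∑ w : W, (Subgroup.closure
        {x | ∃ i : B, x = cs.simple i ∧ cs.length w < cs.length (w * cs.simple i)}).index =
      Nat.card {p : W × W //
        ¬ ∃ i : B, cs.length p.1 < cs.length (p.1 * cs.simple i) ∧
          cs.length (cs.simple i * p.2) < cs.length p.2} := by
  have hparabolic : ∀ w : W,
      Subgroup.closure
          {x | ∃ i : B, x = cs.simple i ∧ cs.length w < cs.length (w * cs.simple i)} =
        cs.parabolicSubgroup {i | cs.length w < cs.length (w * cs.simple i)} := by
    intro w
    simp only [CoxeterSystem.parabolicSubgroup, Set.image, eq_comm, and_comm, Set.mem_ofPred_eq]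
  have hpair : ∀ u z : W, (¬ ∃ i : B, cs.length u < cs.length (u * cs.simple i) ∧
      cs.length (cs.simple i * z) < cs.length z) ↔
        ∀ i ∈ {i | cs.length u < cs.length (u * cs.simple i)},
          cs.length z < cs.length (cs.simple i * z) := by
    intro u z
    simp only [not_exists, not_and, not_lt, Set.mem_ofPred_eq]
    exact forall_congr' fun i => imp_congr_right fun _ =>
      (le_iff_lt_or_eq).trans (or_iff_left (cs.length_simple_mul_ne z i).symm)
  simp_rw [hparabolic, CoxeterSystem.index_parabolicSubgroup, ← Nat.card_sigma]
  exact Nat.card_congr ((Equiv.subtypeProdEquivSigmaSubtype _).symm.trans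
    (Equiv.subtypeEquivRight fun p => (hpair p.1 p.2).symm))
end

section
/- For the symmetric group S_{n+1} with its standard Coxeter generators, the quantity ∑_{w ∈ S_{n+1}} |P(w)\S_{n+1}| equals the number of ordered pairs (σ,τ) of permutations of {1,…,n+1} having no common rise, i.e. no index i ∈ {1,…,n} with both σ(i) < σ(i+1) and τ(i) < τ(i+1). -/
open Equiv

/-- The Coxeter length of a permutation of `Fin (n+1)` with respect to the standard
generators `sᵢ = (i, i+1)`. -/
noncomputable def permLength {n : ℕ} (w : Perm (Fin (n + 1))) : ℕ :=
  sInf {k | ∃ l : List (Fin n),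
    l.length = k ∧ (l.map fun i => Equiv.swap i.castSucc i.succ).prod = w}

/-- The standard parabolic subgroup `P(w)` generated by the simple reflections `s`
with `ℓ(ws) > ℓ(w)`. -/
noncomputable def permP {n : ℕ} (w : Perm (Fin (n + 1))) : Subgroup (Perm (Fin (n + 1))) :=
  Subgroup.closure {x | ∃ i : Fin n, x = Equiv.swap i.castSucc i.succ ∧
    permLength w < permLength (w * Equiv.swap i.castSucc i.succ)}

/-!
The length `ℓ(w)` is the number of inversions of `w`, so `sᵢ ∈ P(w)` exactly when `i` is an
ascent of `w`, and `P(w)` is the standard parabolic subgroup `W_S` of the ascent set `S`.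
Every coset `g W_S` contains exactly one `τ` with a descent at each `i ∈ S`: its element with
the most inversions has this property, and it is unique because `W_S` only permutes points
inside the blocks of consecutive positions linked by `S`, on which such a `τ` is decreasing.
Hence `|W_S \ S_{n+1}|` counts the `τ` whose descents include the ascents of `w`, i.e. those
for which `(w, τ)` has no common rise.
-/

open Finset

namespace Equiv.Perm

variable {α : Type*} [LinearOrder α]

lemma swap_apply_lt_swap_apply {a b x y : α} (hab : a ⋖ b) (hxy : x < y)
    (hne : (x, y) ≠ (a, b)) : swap a b x < swap a b y := by
  rw [swap_apply_def, swap_apply_def]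
  split_ifs <;> subst_vars
  · exact absurd hxy (lt_irrefl _)
  · exact absurd rfl hne
  · exact lt_of_le_of_ne (hab.ge_of_gt hxy) (Ne.symm ‹_›)
  · exact absurd hxy hab.lt.not_gt
  · exact absurd hxy (lt_irrefl _)
  · exact hab.lt.trans hxy
  · exact hxy.trans hab.lt
  · exact lt_of_le_of_ne (hab.le_of_lt hxy) ‹_›
  · exact hxy

variable [Fintype α]

def inversions (w : Perm α) : Finset (α × α) := {p | p.1 < p.2 ∧ w p.2 < w p.1}

@[simp]
lemma mem_inversions {w : Perm α} {p : α × α} :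
    p ∈ inversions w ↔ p.1 < p.2 ∧ w p.2 < w p.1 := by
  simp [inversions]

@[simp]
lemma inversions_one : inversions (1 : Perm α) = ∅ := by
  ext p
  simpa using fun h => h.le

lemma card_inversions_mul_swap {w : Perm α} {a b : α} (hab : a ⋖ b) (h : w a < w b) :
    #(inversions (w * swap a b)) = #(inversions w) + 1 := by
  have hab_mem : (a, b) ∈ inversions (w * swap a b) := by simpa using ⟨hab.lt, h⟩
  rw [← card_erase_add_one hab_mem]
  congr 1
  refine card_nbij' (Prod.map (swap a b) (swap a b)) (Prod.map (swap a b) (swap a b))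
    ?_ ?_ (fun p _ => by simp [Prod.map]) (fun p _ => by simp [Prod.map])
  · rintro ⟨x, y⟩ hxy
    simp only [coe_erase, mem_coe, Set.mem_sdiff, mem_inversions, Set.mem_singleton_iff,
      Prod.map_apply, Prod.mk.injEq, Perm.mul_apply] at hxy ⊢
    exact ⟨swap_apply_lt_swap_apply hab hxy.1.1 (by simpa using hxy.2), hxy.1.2⟩
  · rintro ⟨x, y⟩ hxy
    simp only [coe_erase, mem_coe, Set.mem_sdiff, mem_inversions, Set.mem_singleton_iff,
      Prod.map_apply, Prod.mk.injEq, Perm.mul_apply, swap_apply_self] at hxy ⊢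
    obtain ⟨hxy, hwxy⟩ := hxy
    refine ⟨⟨swap_apply_lt_swap_apply hab hxy ?_, hwxy⟩, ?_⟩
    · rintro ⟨rfl, rfl⟩
      exact h.not_gt hwxy
    · rw [swap_apply_eq_iff, swap_apply_eq_iff, swap_apply_left, swap_apply_right]
      rintro ⟨rfl, rfl⟩
      exact hab.lt.not_gt hxy

lemma card_inversions_mul_swap_of_gt {w : Perm α} {a b : α} (hab : a ⋖ b) (h : w b < w a) :
    #(inversions (w * swap a b)) + 1 = #(inversions w) := by
  simpa [mul_assoc] using (card_inversions_mul_swap (w := w * swap a b) hab (by simpa using h)).symm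

lemma card_inversions_mul_swap_le (w : Perm α) {a b : α} (hab : a ⋖ b) :
    #(inversions (w * swap a b)) ≤ #(inversions w) + 1 := by
  rcases lt_or_gt_of_ne (w.injective.ne hab.lt.ne) with h | h
  · exact (card_inversions_mul_swap hab h).le
  · linarith [card_inversions_mul_swap_of_gt hab h]

end Equiv.Perm

open Equiv.Perm

section SymmetricGroup

variable {n : ℕ}

lemma Fin.castSucc_covBy_succ (i : Fin n) : i.castSucc ⋖ i.succ :=
  ⟨Fin.castSucc_lt_succ, fun c h₁ h₂ => by
    rw [Fin.lt_def] at h₁ h₂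
    simp only [Fin.val_castSucc, Fin.val_succ] at h₁ h₂
    omega⟩

lemma exists_descent_of_ne_one {w : Perm (Fin (n + 1))} (hw : w ≠ 1) :
    ∃ i : Fin n, w i.succ < w i.castSucc := by
  by_contra! h
  have hmono : StrictMono w := Fin.strictMono_iff_lt_succ.2 fun i =>
    (h i).lt_of_ne (w.injective.ne Fin.castSucc_lt_succ.ne)
  exact hw (Equiv.ext fun x => congrFun hmono.eq_id x)

lemma exists_word_length_eq_card_inversions (w : Perm (Fin (n + 1))) :
    ∃ l : List (Fin n), l.length = #(inversions w) ∧
      (l.map fun i => swap i.castSucc i.succ).prod = w := by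
  induction hk : #(inversions w) using Nat.strong_induction_on generalizing w with
  | _ k ih =>
  by_cases hw : w = 1
  · subst hw
    exact ⟨[], by simp_all, by simp⟩
  obtain ⟨i, hi⟩ := exists_descent_of_ne_one hw
  have hfewer := card_inversions_mul_swap_of_gt (Fin.castSucc_covBy_succ i) hi
  obtain ⟨l, hl, hprod⟩ := ih _ (by omega) (w * swap i.castSucc i.succ) rfl
  exact ⟨l ++ [i], by simp [hl]; omega, by simp [hprod, mul_assoc]⟩

lemma card_inversions_prod_le_length (l : List (Fin n)) :
    #(inversions (l.map fun i => swap i.castSucc i.succ).prod) ≤ l.length := by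
  induction l using List.reverseRecOn with
  | nil => simp
  | append_singleton l i ih =>
    simp only [List.map_append, List.prod_append, List.map_cons, List.map_nil, List.prod_cons,
      List.prod_nil, mul_one, List.length_append, List.length_cons, List.length_nil]
    linarith [card_inversions_mul_swap_le (l.map fun i => swap i.castSucc i.succ).prod
      (Fin.castSucc_covBy_succ i)]

lemma permLength_eq_card_inversions (w : Perm (Fin (n + 1))) :
    permLength w = #(inversions w) := by
  obtain ⟨l, hl, hw⟩ := exists_word_length_eq_card_inversions w
  refine le_antisymm (Nat.sInf_le ⟨l, hl, hw⟩) (le_csInf ⟨_, l, hl, hw⟩ ?_)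
  rintro k ⟨l', rfl, rfl⟩
  exact card_inversions_prod_le_length l'

lemma permLength_lt_permLength_mul_swap_iff {w : Perm (Fin (n + 1))} {i : Fin n} :
    permLength w < permLength (w * swap i.castSucc i.succ) ↔ w i.castSucc < w i.succ := by
  rw [permLength_eq_card_inversions, permLength_eq_card_inversions]
  rcases lt_or_gt_of_ne (w.injective.ne (Fin.castSucc_covBy_succ i).lt.ne) with h | h
  · simp [h, card_inversions_mul_swap (Fin.castSucc_covBy_succ i) h]
  · have := card_inversions_mul_swap_of_gt (Fin.castSucc_covBy_succ i) h
    simp only [h.not_gt, iff_false]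
    omega

def permParabolic (S : Set (Fin n)) : Subgroup (Perm (Fin (n + 1))) :=
  Subgroup.closure ((fun i => swap i.castSucc i.succ) '' S)

lemma permP_eq_permParabolic (w : Perm (Fin (n + 1))) :
    permP w = permParabolic {i | w i.castSucc < w i.succ} := by
  simp only [permP, permParabolic, permLength_lt_permLength_mul_swap_iff]
  congr 1
  ext
  simp [eq_comm, and_comm]

def DescendsOn (S : Set (Fin n)) (τ : Perm (Fin (n + 1))) : Prop :=
  ∀ i ∈ S, τ i.succ < τ i.castSucc

lemma exists_descendsOn_mul (S : Set (Fin n)) (g : Perm (Fin (n + 1))) :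
    ∃ h ∈ permParabolic S, DescendsOn S (g * h) := by
  classical
  obtain ⟨h, hh, hmax⟩ := exists_max_image {h | h ∈ permParabolic S}
    (fun h => #(inversions (g * h))) ⟨1, by simp⟩
  rw [mem_filter_univ] at hh
  refine ⟨h, hh, fun i hi => lt_of_not_ge fun hle => ?_⟩
  have hasc : (g * h) i.castSucc < (g * h) i.succ :=
    hle.lt_of_ne ((g * h).injective.ne Fin.castSucc_lt_succ.ne)
  have hmem : h * swap i.castSucc i.succ ∈ permParabolic S :=
    mul_mem hh (Subgroup.subset_closure ⟨i, hi, rfl⟩)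
  have := hmax _ (by simpa using hmem)
  rw [← mul_assoc, card_inversions_mul_swap (Fin.castSucc_covBy_succ i) hasc] at this
  omega

/-- `x` and `y` are not separated by a gap `i, i+1` with `i ∉ S`; the equivalence classes are
the orbits of `permParabolic S`. -/
def SameBlock (S : Set (Fin n)) (x y : Fin (n + 1)) : Prop :=
  ∀ i ∉ S, (i.castSucc < x ↔ i.castSucc < y)

lemma sameBlock_equivalence (S : Set (Fin n)) : Equivalence (SameBlock S) where
  refl _ _ _ := Iff.rfl
  symm h i hi := (h i hi).symm
  trans h₁ h₂ i hi := (h₁ i hi).trans (h₂ i hi)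

def blockPreserving (S : Set (Fin n)) : Subgroup (Perm (Fin (n + 1))) where
  carrier := {h | ∀ x, SameBlock S (h x) x}
  one_mem' x := (sameBlock_equivalence S).refl x
  mul_mem' {a b} ha hb x := (sameBlock_equivalence S).trans (ha (b x)) (hb x)
  inv_mem' {a} ha x := by simpa using (sameBlock_equivalence S).symm (ha (a⁻¹ x))

lemma permParabolic_le_blockPreserving (S : Set (Fin n)) :
    permParabolic S ≤ blockPreserving S := by
  rw [permParabolic, Subgroup.closure_le]
  rintro _ ⟨i, hi, rfl⟩ x j hj
  have hji : j.val ≠ i.val := fun h => hj (Fin.ext h ▸ hi)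
  simp only [Fin.lt_def, Fin.val_castSucc]
  rw [swap_apply_def]
  split_ifs <;> subst_vars <;> simp only [Fin.val_castSucc, Fin.val_succ] <;> omega

lemma DescendsOn.strictAntiOn_sameBlock {S : Set (Fin n)} {τ : Perm (Fin (n + 1))}
    (hτ : DescendsOn S τ) (x : Fin (n + 1)) : StrictAntiOn τ {y | SameBlock S x y} := by
  refine strictAntiOn_of_succ_lt ⟨fun y hy z hz u ⟨hyu, huz⟩ i hi => ?_⟩ ?_
  · exact ⟨fun h => ((hy i hi).1 h).trans_le hyu, fun h => (hz i hi).2 (h.trans_le huz)⟩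
  · intro a ha hxa hxsa
    obtain ⟨i, rfl⟩ : ∃ i : Fin n, i.castSucc = a :=
      Fin.exists_castSucc_eq.2 (by simpa [isMax_iff_eq_top, Fin.top_eq_last] using ha)
    rw [Fin.orderSucc_castSucc] at hxsa ⊢
    refine hτ i (by_contra fun hi => ?_)
    simpa using ((hxa i hi).symm.trans (hxsa i hi)).2 Fin.castSucc_lt_succ

lemma eq_one_of_descendsOn_of_descendsOn_mul {S : Set (Fin n)} {τ h : Perm (Fin (n + 1))}
    (hh : h ∈ permParabolic S) (hτ : DescendsOn S τ) (hτh : DescendsOn S (τ * h)) :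
    h = 1 := by
  have hblock : ∀ x, SameBlock S (h x) x := permParabolic_le_blockPreserving S hh
  suffices hmono : StrictMono h from Equiv.ext fun x => congrFun hmono.eq_id x
  intro x y hxy
  by_cases hxy_block : SameBlock S x y
  · -- `τ` and `τ * h` both reverse the order on the block of `x`, which `h` maps to itself.
    have hhy : SameBlock S x (h y) := (sameBlock_equivalence S).trans hxy_block
      ((sameBlock_equivalence S).symm (hblock y))
    have hhx : SameBlock S x (h x) := (sameBlock_equivalence S).symm (hblock x)
    have hrev : τ (h y) < τ (h x) :=
      hτh.strictAntiOn_sameBlock x ((sameBlock_equivalence S).refl x) hxy_block hxy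
    exact (hτ.strictAntiOn_sameBlock x).lt_iff_gt hhy hhx |>.1 hrev
  · obtain ⟨i, hi, hsep⟩ : ∃ i ∉ S, ¬(i.castSucc < x ↔ i.castSucc < y) := by
      simpa [SameBlock] using hxy_block
    have hix : ¬i.castSucc < x := fun hix => hsep ⟨fun _ => hix.trans hxy, fun _ => hix⟩
    have hiy : i.castSucc < y := by tauto
    exact (not_lt.1 fun h' => hix ((hblock x i hi).1 h')).trans_lt ((hblock y i hi).2 hiy)

lemma index_permParabolic (S : Set (Fin n)) :
    (permParabolic S).index = Nat.card {τ // DescendsOn S τ} := by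
  rw [Subgroup.index_eq_card]
  refine (Nat.card_eq_of_bijective (fun τ => (τ.1 : Perm (Fin (n + 1)) ⧸ permParabolic S))
    ⟨?_, ?_⟩).symm
  · rintro ⟨τ, hτ⟩ ⟨σ, hσ⟩ heq
    have hmem : τ⁻¹ * σ ∈ permParabolic S := QuotientGroup.eq.1 heq
    have := eq_one_of_descendsOn_of_descendsOn_mul hmem hτ (by simpa using hσ)
    exact Subtype.ext (inv_mul_eq_one.1 this)
  · intro q
    obtain ⟨g, rfl⟩ := QuotientGroup.mk_surjective q
    obtain ⟨h, hh, hgh⟩ := exists_descendsOn_mul S g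
    exact ⟨⟨g * h, hgh⟩, QuotientGroup.mk_mul_of_mem g hh⟩

lemma not_exists_common_rise_iff (σ τ : Perm (Fin (n + 1))) :
    (¬∃ i : Fin n, σ i.castSucc < σ i.succ ∧ τ i.castSucc < τ i.succ) ↔
      DescendsOn {i | σ i.castSucc < σ i.succ} τ := by
  simp only [not_exists, not_and, not_lt, DescendsOn, Set.mem_ofPred_eq]
  exact forall_congr' fun i => imp_congr_right fun _ =>
    Ne.le_iff_lt (τ.injective.ne Fin.castSucc_lt_succ.ne')

end SymmetricGroup

/-- For the symmetric group `S_{n+1}` with its standard Coxeter generators,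
`∑_{w} |P(w)\S_{n+1}|` equals the number of ordered pairs `(σ,τ)` of permutations of
`{1,…,n+1}` having no common rise, i.e. no index `i` with both `σ(i) < σ(i+1)` and
`τ(i) < τ(i+1)`. -/
theorem sum_index_parabolic_eq_card_pairs_no_common_rise (n : ℕ) :
    ∑ w : Perm (Fin (n + 1)), (permP w).index =
      Nat.card {p : Perm (Fin (n + 1)) × Perm (Fin (n + 1)) //
        ¬ ∃ i : Fin n, p.1 i.castSucc < p.1 i.succ ∧ p.2 i.castSucc < p.2 i.succ} := by
  calc ∑ w : Perm (Fin (n + 1)), (permP w).index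
      = ∑ w : Perm (Fin (n + 1)),
          Nat.card {τ // DescendsOn {i | w i.castSucc < w i.succ} τ} := by
        simp only [permP_eq_permParabolic, index_permParabolic]
    _ = Nat.card (Σ w : Perm (Fin (n + 1)), {τ // DescendsOn {i | w i.castSucc < w i.succ} τ}) :=
        Nat.card_sigma.symm
    _ = _ := Nat.card_congr <| (subtypeProdEquivSigmaSubtype _).symm.trans <|
        subtypeEquivRight fun p => (not_exists_common_rise_iff p.1 p.2).symm
end

section
/- Let a_n denote the number of ordered pairs (σ,τ) of permutations of {1,…,n} with no common rise (with a_0 = 1). Then the formal power series identity (∑_{n≥0} a_n x^n/(n!)²) · (∑_{n≥0} (−1)^n x^n/(n!)²) = 1 holds; equivalently, ∑_{k=0}^{n} (−1)^k (C(n,k))² a_{n−k} = 0 for all n ≥ 1. -/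
/-!
Let `G n m` count the pairs of permutations of size `n` whose common rises are exactly the
positions `0, …, m - 1`. Fix `1 ≤ k ≤ n` and count the pairs with common rises at all
positions `< k - 1` and at none `≥ k`, position `k - 1` being free: splitting on it gives
`G n k + G n (k - 1)`. On the other hand both permutations of such a pair increase on their
first `k` entries, so each is determined by the set of its last `n - k` values and the relative
order of those values, and the rises at positions `≥ k` are the rises of that pattern. Hence
`C(n, k)² a (n - k) = G n k + G n (k - 1)`, the alternating sum telescopes to `± G n n`, and
`G n n = 0` since position `n - 1` is never a rise. The power series identity is the same
statement read off coefficientwise.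
-/

open Equiv

/-- `noCommonRisePairs n` is the number of ordered pairs `(σ,τ)` of permutations of
`{1,…,n}` with no common rise: there is no index `i` with `σ(i) < σ(i+1)` and
`τ(i) < τ(i+1)`.  (For `n = 0` this is `1`.) -/
noncomputable def noCommonRisePairs (n : ℕ) : ℕ :=
  Nat.card {p : Perm (Fin n) × Perm (Fin n) //
    ¬ ∃ i j : Fin n, (j : ℕ) = (i : ℕ) + 1 ∧ p.1 i < p.1 j ∧ p.2 i < p.2 j}

lemma Nat.card_subtype_eq_card_and_add_card_and_not {α : Type*} [Finite α] (P Q : α → Prop) :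
    Nat.card {x // P x} = Nat.card {x // P x ∧ Q x} + Nat.card {x // P x ∧ ¬ Q x} := by
  classical
  rw [← Nat.card_congr (subtypeSubtypeEquivSubtypeInter P Q),
    ← Nat.card_congr (subtypeSubtypeEquivSubtypeInter P (¬ Q ·)), ← Nat.card_sum]
  exact Nat.card_congr (sumCompl fun x : {x // P x} => Q x).symm

lemma Nat.card_subtype_snd_snd {α β : Type*} (P : β × β → Prop) :
    Nat.card {x : (α × β) × (α × β) // P (x.1.2, x.2.2)} =
      Nat.card α ^ 2 * Nat.card {q // P q} := by
  rw [sq, ← Nat.card_prod, ← Nat.card_prod]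
  exact Nat.card_congr
    { toFun := fun x => ((x.1.1.1, x.1.2.1), ⟨(x.1.1.2, x.1.2.2), x.2⟩)
      invFun := fun y => ⟨((y.1.1, y.2.1.1), (y.1.2, y.2.1.2)), y.2.2⟩
      left_inv := fun _ => rfl
      right_inv := fun _ => rfl }

open Finset in
lemma PowerSeries.coeff_mul_mk_alternating_inv_factorial_sq (a : ℕ → ℚ) (n : ℕ) :
    PowerSeries.coeff n (PowerSeries.mk (fun n => a n / (n.factorial : ℚ) ^ 2) *
        PowerSeries.mk (fun n => (-1 : ℚ) ^ n / (n.factorial : ℚ) ^ 2)) =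
      (∑ k ∈ range (n + 1), (-1 : ℚ) ^ k * (n.choose k : ℚ) ^ 2 * a (n - k)) /
        (n.factorial : ℚ) ^ 2 := by
  rw [PowerSeries.coeff_mul, ← Nat.sum_antidiagonal_swap,
    Nat.sum_antidiagonal_eq_sum_range_succ_mk, sum_div]
  refine sum_congr rfl fun k hk => ?_
  have hk : k ≤ n := mem_range_succ_iff.mp hk
  simp only [Prod.swap_prod_mk, PowerSeries.coeff_mk, Nat.cast_choose ℚ hk]
  field_simp

namespace NoCommonRise

-- Positions are natural numbers; there is no rise at a position `i` with `i + 1 ≥ N`.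
def IsRise {N : ℕ} (σ : Perm (Fin N)) (i : ℕ) : Prop :=
  ∃ h : i + 1 < N, σ ⟨i, by omega⟩ < σ ⟨i + 1, h⟩

def IsCommonRise {N : ℕ} (p : Perm (Fin N) × Perm (Fin N)) (i : ℕ) : Prop :=
  IsRise p.1 i ∧ IsRise p.2 i

lemma exists_isCommonRise_iff {N : ℕ} (p : Perm (Fin N) × Perm (Fin N)) :
    (∃ i, IsCommonRise p i) ↔
      ∃ i j : Fin N, (j : ℕ) = (i : ℕ) + 1 ∧ p.1 i < p.1 j ∧ p.2 i < p.2 j := by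
  constructor
  · rintro ⟨i, ⟨h, h₁⟩, _, h₂⟩
    exact ⟨⟨i, by omega⟩, ⟨i + 1, h⟩, rfl, h₁, h₂⟩
  · rintro ⟨i, ⟨j, hj⟩, rfl, h₁, h₂⟩
    exact ⟨i, ⟨hj, h₁⟩, hj, h₂⟩

lemma noCommonRisePairs_eq_card (N : ℕ) :
    noCommonRisePairs N =
      Nat.card {p : Perm (Fin N) × Perm (Fin N) // ∀ i, ¬ IsCommonRise p i} :=
  Nat.card_congr <| subtypeEquivRight fun p => by
    rw [← exists_isCommonRise_iff, not_exists]

lemma noCommonRisePairs_zero : noCommonRisePairs 0 = 1 := by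
  rw [noCommonRisePairs_eq_card, Nat.card_eq_one_iff_unique]
  exact ⟨inferInstance, ⟨⟨1, fun i ⟨⟨h, _⟩, _⟩ => by omega⟩⟩⟩

noncomputable def initialCommonRiseCount (N m : ℕ) : ℕ :=
  Nat.card {p : Perm (Fin N) × Perm (Fin N) // ∀ i, IsCommonRise p i ↔ i < m}

lemma initialCommonRiseCount_zero (N : ℕ) :
    initialCommonRiseCount N 0 = noCommonRisePairs N := by
  rw [noCommonRisePairs_eq_card]
  exact Nat.card_congr <| subtypeEquivRight fun p => by simp

lemma initialCommonRiseCount_self {N : ℕ} (hN : 0 < N) : initialCommonRiseCount N N = 0 := by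
  rw [initialCommonRiseCount, Nat.card_eq_zero]
  left
  refine ⟨fun ⟨p, hp⟩ => ?_⟩
  obtain ⟨⟨h, _⟩, _⟩ := (hp (N - 1)).2 (by omega)
  omega

lemma card_commonRisesExcept_eq_add (N j : ℕ) :
    Nat.card {p : Perm (Fin N) × Perm (Fin N) // ∀ i ≠ j, IsCommonRise p i ↔ i < j} =
      initialCommonRiseCount N (j + 1) + initialCommonRiseCount N j := by
  rw [Nat.card_subtype_eq_card_and_add_card_and_not _ (IsCommonRise · j)]
  congr 1 <;> exact Nat.card_congr <| subtypeEquivRight fun p => by grind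

section AppendPattern

variable {k m : ℕ} {B : Finset (Fin (k + m))}

lemma card_compl_eq_of_card_eq (hB : B.card = m) : Bᶜ.card = k := by
  rw [Finset.card_compl, hB, Fintype.card_fin, Nat.add_sub_cancel]

variable (hB : B.card = m)

noncomputable def appendPattern (p : Perm (Fin m)) : Perm (Fin (k + m)) :=
  ofBijective
    (Fin.append (Bᶜ.orderEmbOfFin (card_compl_eq_of_card_eq hB)) (B.orderEmbOfFin hB ∘ p)) <|
    Finite.injective_iff_bijective.mp <| Fin.append_injective_iff.mpr
      ⟨(Bᶜ.orderEmbOfFin _).injective, (B.orderEmbOfFin hB).injective.comp p.injective,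
        fun i _ h =>
          Finset.mem_compl.mp (h ▸ Bᶜ.orderEmbOfFin_mem _ i) (B.orderEmbOfFin_mem hB _)⟩

variable (p : Perm (Fin m))

lemma appendPattern_castAdd (i : Fin k) :
    appendPattern hB p (Fin.castAdd m i) = Bᶜ.orderEmbOfFin (card_compl_eq_of_card_eq hB) i :=
  Fin.append_left ..

lemma appendPattern_natAdd (i : Fin m) :
    appendPattern hB p (Fin.natAdd k i) = B.orderEmbOfFin hB (p i) :=
  Fin.append_right ..

lemma strictMono_appendPattern_comp_castAdd :
    StrictMono (appendPattern hB p ∘ Fin.castAdd m) := by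
  intro i j hij
  simpa only [Function.comp_apply, appendPattern_castAdd] using
    (Bᶜ.orderEmbOfFin _).strictMono hij

lemma range_appendPattern_comp_natAdd : Set.range (appendPattern hB p ∘ Fin.natAdd k) = B := by
  have : appendPattern hB p ∘ Fin.natAdd k = B.orderEmbOfFin hB ∘ p :=
    funext (appendPattern_natAdd hB p)
  rw [this, p.surjective.range_comp, Finset.range_orderEmbOfFin]

lemma isRise_appendPattern_add (i : ℕ) : IsRise (appendPattern hB p) (k + i) ↔ IsRise p i := by
  have hval (j : ℕ) (hj : j < m) :
      appendPattern hB p ⟨k + j, by omega⟩ = B.orderEmbOfFin hB (p ⟨j, hj⟩) :=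
    appendPattern_natAdd hB p ⟨j, hj⟩
  constructor
  · rintro ⟨h, hlt⟩
    change appendPattern hB p ⟨k + i, _⟩ < appendPattern hB p ⟨k + (i + 1), _⟩ at hlt
    rw [hval i (by omega), hval (i + 1) (by omega)] at hlt
    exact ⟨by omega, (B.orderEmbOfFin hB).lt_iff_lt.mp hlt⟩
  · rintro ⟨h, hlt⟩
    refine ⟨by omega, ?_⟩
    change appendPattern hB p ⟨k + i, _⟩ < appendPattern hB p ⟨k + (i + 1), _⟩
    rw [hval i (by omega), hval (i + 1) h]
    exact (B.orderEmbOfFin hB).lt_iff_lt.mpr hlt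

lemma appendPattern_injective :
    Function.Injective fun x : {B : Finset (Fin (k + m)) // B.card = m} × Perm (Fin m) =>
      appendPattern x.1.2 x.2 := by
  rintro ⟨⟨B, hB⟩, p⟩ ⟨⟨B', hB'⟩, p'⟩ h
  obtain rfl : B = B' := by
    rw [← Finset.coe_inj, ← range_appendPattern_comp_natAdd hB p,
      ← range_appendPattern_comp_natAdd hB' p']
    exact congrArg (fun σ : Perm (Fin (k + m)) => Set.range (σ ∘ Fin.natAdd k)) h
  obtain rfl : p = p' := Equiv.ext fun i => (B.orderEmbOfFin hB).injective <| by
    rw [← appendPattern_natAdd, ← appendPattern_natAdd]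
    exact DFunLike.congr_fun h _
  rfl

lemma exists_appendPattern_eq (σ : Perm (Fin (k + m))) (hσ : StrictMono (σ ∘ Fin.castAdd m)) :
    ∃ (B : Finset (Fin (k + m))) (hB : B.card = m) (p : Perm (Fin m)),
      appendPattern hB p = σ := by
  classical
  set B := Finset.univ.image (σ ∘ Fin.natAdd k)
  have hB : B.card = m := by
    rw [Finset.card_image_of_injective _ (σ.injective.comp (Fin.natAdd_injective m k)),
      Finset.card_univ, Fintype.card_fin]
  have hmem (i : Fin m) : σ (Fin.natAdd k i) ∈ B := Finset.mem_image_of_mem _ (Finset.mem_univ i)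
  have hprefix : σ ∘ Fin.castAdd m = Bᶜ.orderEmbOfFin (card_compl_eq_of_card_eq hB) := by
    refine Finset.orderEmbOfFin_unique _ (fun i => Finset.mem_compl.mpr fun h => ?_) hσ
    obtain ⟨j, -, hj⟩ := Finset.mem_image.mp h
    have := congrArg Fin.val (σ.injective hj)
    simp only [Fin.val_natAdd, Fin.val_castAdd] at this
    omega
  have hpattern : Function.Injective fun i => (B.orderIsoOfFin hB).symm ⟨_, hmem i⟩ :=
    fun i j h => σ.injective.comp (Fin.natAdd_injective m k) <|
      congrArg Subtype.val ((B.orderIsoOfFin hB).symm.injective h)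
  refine ⟨B, hB, ofBijective _ (Finite.injective_iff_bijective.mp hpattern), ?_⟩
  refine Equiv.ext (Fin.addCases (fun i => ?_) fun i => ?_)
  · rw [appendPattern_castAdd, ← hprefix, Function.comp_apply]
  · rw [appendPattern_natAdd, ← Finset.coe_orderIsoOfFin_apply, ofBijective_apply,
      OrderIso.apply_symm_apply]

end AppendPattern

lemma strictMono_comp_castAdd_iff {j m : ℕ} (σ : Perm (Fin (j + 1 + m))) :
    StrictMono (σ ∘ Fin.castAdd m) ↔ ∀ i < j, IsRise σ i := by
  rw [Fin.strictMono_iff_lt_succ]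
  exact ⟨fun h i hi => ⟨by omega, h ⟨i, hi⟩⟩, fun h i => (h i i.2).2⟩

lemma commonRisesExcept_iff {j m : ℕ} (p : Perm (Fin (j + 1 + m)) × Perm (Fin (j + 1 + m))) :
    (∀ i ≠ j, IsCommonRise p i ↔ i < j) ↔
      StrictMono (p.1 ∘ Fin.castAdd m) ∧ StrictMono (p.2 ∘ Fin.castAdd m) ∧
        ∀ i, ¬ IsCommonRise p (j + 1 + i) := by
  simp only [strictMono_comp_castAdd_iff, IsCommonRise]
  constructor
  · intro h
    refine ⟨fun i hi => ((h i (by omega)).2 hi).1, fun i hi => ((h i (by omega)).2 hi).2,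
      fun i hi => ?_⟩
    have := (h (j + 1 + i) (by omega)).1 hi
    omega
  · rintro ⟨h₁, h₂, h₃⟩ i hi
    refine ⟨fun hr => ?_, fun hij => ⟨h₁ i hij, h₂ i hij⟩⟩
    by_contra hij
    exact h₃ (i - (j + 1)) (by rwa [show j + 1 + (i - (j + 1)) = i by omega])

lemma card_commonRisesExcept_eq_choose_sq_mul (j m : ℕ) :
    Nat.card {p : Perm (Fin (j + 1 + m)) × Perm (Fin (j + 1 + m)) //
        ∀ i ≠ j, IsCommonRise p i ↔ i < j} =
      ((j + 1 + m).choose m) ^ 2 * noCommonRisePairs m := by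
  let F (x : ({B : Finset (Fin (j + 1 + m)) // B.card = m} × Perm (Fin m)) ×
      ({B : Finset (Fin (j + 1 + m)) // B.card = m} × Perm (Fin m))) :
      Perm (Fin (j + 1 + m)) × Perm (Fin (j + 1 + m)) :=
    (appendPattern x.1.1.2 x.1.2, appendPattern x.2.1.2 x.2.2)
  have hF (x) :
      (∀ i ≠ j, IsCommonRise (F x) i ↔ i < j) ↔
        ∀ i, ¬ IsCommonRise (x.1.2, x.2.2) i := by
    rw [commonRisesExcept_iff]
    simp only [IsCommonRise, isRise_appendPattern_add, F,
      strictMono_appendPattern_comp_castAdd, true_and]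
  have hbij : Function.Bijective fun x : {x // ∀ i, ¬ IsCommonRise (x.1.2, x.2.2) i} =>
      (⟨F x.1, (hF x.1).2 x.2⟩ : {p // ∀ i ≠ j, IsCommonRise p i ↔ i < j}) := by
    refine ⟨fun x y h => Subtype.ext <| Prod.ext
      (appendPattern_injective (congrArg (·.1.1) h))
      (appendPattern_injective (congrArg (·.1.2) h)), ?_⟩
    rintro ⟨⟨σ, τ⟩, hp⟩
    obtain ⟨hσ, hτ, -⟩ := (commonRisesExcept_iff _).1 hp
    obtain ⟨B, hB, σ', rfl⟩ := exists_appendPattern_eq σ hσ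
    obtain ⟨C, hC, τ', rfl⟩ := exists_appendPattern_eq τ hτ
    exact ⟨⟨((⟨B, hB⟩, σ'), (⟨C, hC⟩, τ')), (hF _).1 hp⟩, rfl⟩
  rw [← Nat.card_eq_of_bijective _ hbij,
    Nat.card_subtype_snd_snd fun q => ∀ i, ¬ IsCommonRise q i, noCommonRisePairs_eq_card,
    Nat.card_eq_fintype_card, Fintype.card_finset_len, Fintype.card_fin]

lemma choose_sq_mul_noCommonRisePairs {n j : ℕ} (h : j < n) :
    n.choose (j + 1) ^ 2 * noCommonRisePairs (n - (j + 1)) =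
      initialCommonRiseCount n (j + 1) + initialCommonRiseCount n j := by
  obtain ⟨m, rfl⟩ : ∃ m, n = j + 1 + m := ⟨n - (j + 1), by omega⟩
  rw [Nat.add_sub_cancel_left, Nat.choose_symm_add,
    ← card_commonRisesExcept_eq_choose_sq_mul, card_commonRisesExcept_eq_add]

theorem sum_alternating_choose_sq_mul_noCommonRisePairs {n : ℕ} (hn : 1 ≤ n) :
    ∑ k ∈ Finset.range (n + 1),
      (-1 : ℤ) ^ k * (n.choose k : ℤ) ^ 2 * (noCommonRisePairs (n - k) : ℤ) = 0 := by
  set G : ℕ → ℤ := fun j => (-1) ^ j * initialCommonRiseCount n j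
  have hterm : ∀ j ∈ Finset.range n, (-1 : ℤ) ^ (j + 1) * (n.choose (j + 1) : ℤ) ^ 2 *
      noCommonRisePairs (n - (j + 1)) = G (j + 1) - G j := fun j hj => by
    rw [mul_assoc, ← Nat.cast_pow, ← Nat.cast_mul,
      choose_sq_mul_noCommonRisePairs (Finset.mem_range.mp hj)]
    push_cast
    ring
  rw [Finset.sum_range_succ', Finset.sum_congr rfl hterm, Finset.sum_range_sub]
  simp [G, initialCommonRiseCount_self hn, initialCommonRiseCount_zero]

end NoCommonRise

/-- Let `a n` be the number of ordered pairs of permutations of `{1,…,n}` with no common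
rise.  Then `(∑ aₙ xⁿ/(n!)²) · (∑ (−1)ⁿ xⁿ/(n!)²) = 1` as formal power series;
equivalently, `∑_{k=0}^{n} (−1)^k (C(n,k))² a_{n−k} = 0` for all `n ≥ 1`. -/
theorem noCommonRise_bessel_identity :
    (PowerSeries.mk (fun n => (noCommonRisePairs n : ℚ) / ((n.factorial : ℚ))^2)) *
      (PowerSeries.mk (fun n => ((-1 : ℚ))^n / ((n.factorial : ℚ))^2)) = 1 ∧
    ∀ n : ℕ, 1 ≤ n →
      ∑ k ∈ Finset.range (n + 1),
        ((-1 : ℤ))^k * (n.choose k : ℤ)^2 * (noCommonRisePairs (n - k) : ℤ) = 0 := by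
  refine ⟨PowerSeries.ext fun n => ?_,
    fun n => NoCommonRise.sum_alternating_choose_sq_mul_noCommonRisePairs⟩
  rw [PowerSeries.coeff_mul_mk_alternating_inv_factorial_sq, PowerSeries.coeff_one]
  rcases Nat.eq_zero_or_pos n with rfl | hn
  · simp [NoCommonRise.noCommonRisePairs_zero]
  · rw [if_neg hn.ne', div_eq_zero_iff]
    exact Or.inl (mod_cast NoCommonRise.sum_alternating_choose_sq_mul_noCommonRisePairs hn)
end

section
/- Let M be the module of formal sums ∑_{n∈ℤ} m_n A_n with m_n ∈ ℤ[v,v⁻¹] and support bounded below, and define T(A_n) = A_{n+1} if n is odd, and T(A_n) = A_{n−1} + (v − v⁻¹)A_n if n is even, extended by linearity and continuity. Then T satisfies the quadratic relation (T − v)(T + v⁻¹) = 0 on M. -/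
noncomputable section

/-- The abbreviation `v` for the variable of `ℤ[v,v⁻¹]`. -/
def v (n : ℤ) : LaurentPolynomial ℤ := LaurentPolynomial.T n

/-- The type A₁ periodic Hecke module operator `T` on formal sums `∑ mₙ Aₙ`
(encoded as coefficient functions `ℤ → ℤ[v,v⁻¹]`), determined by
`T(Aₙ) = Aₙ₊₁` for `n` odd and `T(Aₙ) = Aₙ₋₁ + (v − v⁻¹)Aₙ` for `n` even,
extended by linearity and continuity: the coefficient of `Aₙ` in `T f` is
`f(n−1) + (v − v⁻¹) f(n)` if `n` is even, and `f(n+1)` if `n` is odd. -/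
def Tact (f : ℤ → LaurentPolynomial ℤ) : ℤ → LaurentPolynomial ℤ := fun n =>
  if Even n then f (n - 1) + (v 1 - v (-1)) * f n else f (n + 1)

theorem Tact_apply_of_even {f : ℤ → LaurentPolynomial ℤ} {n : ℤ} (hn : Even n) :
    Tact f n = f (n - 1) + (v 1 - v (-1)) * f n :=
  if_pos hn

theorem Tact_apply_of_odd {f : ℤ → LaurentPolynomial ℤ} {n : ℤ} (hn : Odd n) :
    Tact f n = f (n + 1) :=
  if_neg (Int.not_even_iff_odd.mpr hn)

-- Coefficientwise the relation is a ring identity, valid for any value of `v − v⁻¹`.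
theorem Top_quadratic_relation_general (f : ℤ → LaurentPolynomial ℤ) :
    Tact (Tact f) + (v (-1) - v 1) • Tact f = f := by
  funext n
  simp only [Pi.add_apply, Pi.smul_apply, smul_eq_mul]
  rcases Int.even_or_odd n with hn | hn
  · have hpred : Odd (n - 1) := hn.sub_odd odd_one
    rw [Tact_apply_of_even hn, Tact_apply_of_odd hpred, Tact_apply_of_even hn, sub_add_cancel]
    ring
  · have hsucc : Even (n + 1) := hn.add_one
    rw [Tact_apply_of_odd hn, Tact_apply_of_even hsucc, Tact_apply_of_odd hn, add_sub_cancel_right]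
    ring

/-- On the module `M` of formal sums with support bounded below, the operator `T`
satisfies the quadratic relation `(T − v)(T + v⁻¹) = 0`, i.e.
`T² + (v⁻¹ − v)T − 1 = 0`. -/
theorem Top_quadratic_relation (f : ℤ → LaurentPolynomial ℤ)
    (hf : BddBelow {n : ℤ | f n ≠ 0}) :
    Tact (Tact f) + (v (-1) - v 1) • Tact f = f :=
  Top_quadratic_relation_general f

end
end

section
/- In the type A₁ periodic Hecke module M (formal sums over alcoves A_n, n ∈ ℤ, with coefficients in ℤ[v,v⁻¹], supported bounded below, with T(A_n) = A_{n+1} for n odd and T(A_n) = A_{n−1} + (v−v⁻¹)A_n for n even), define A_n^♯ = A_n + ∑_{i=1}^∞ (−1)^i v^{−i} A_{n+i}. Then T(A_n^♯) = −v⁻¹ A_n^♯ if n is odd, and T(A_n^♯) = v A_n^♯ + A_{n−1}^♯ + A_{n+1}^♯ if n is even. -/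
noncomputable section

/-- The canonical basis element `Aₙ^♯ = Aₙ + ∑_{i≥1} (−1)ⁱ v⁻ⁱ Aₙ₊ᵢ`, as a
coefficient function. -/
def sharp (n : ℤ) : ℤ → LaurentPolynomial ℤ := fun m =>
  if n ≤ m then ((-1 : LaurentPolynomial ℤ)) ^ (m - n).toNat * v (n - m) else 0

lemma v_mul (a b : ℤ) : v a * v b = v (a + b) := (LaurentPolynomial.T_add a b).symm

lemma v_zero : v 0 = 1 := LaurentPolynomial.T_zero

/-- `T(Aₙ^♯) = −v⁻¹ Aₙ^♯` if `n` is odd, and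
`T(Aₙ^♯) = v Aₙ^♯ + Aₙ₋₁^♯ + Aₙ₊₁^♯` if `n` is even. -/
theorem Tact_sharp (n : ℤ) :
    (Odd n → Tact (sharp n) = (-(v (-1))) • sharp n) ∧
    (Even n → Tact (sharp n) = v 1 • sharp n + sharp (n - 1) + sharp (n + 1)) := by
  constructor
  · intro h
    obtain ⟨a, ha⟩ := h
    funext m
    simp only [Tact, sharp, Pi.smul_apply, smul_eq_mul]
    by_cases hm : Even m
    · obtain ⟨b, hb⟩ := hm
      rw [if_pos ⟨b, hb⟩]
      by_cases hle : n ≤ m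
      · rw [if_pos (by omega : n ≤ m - 1), if_pos hle]
        rw [show (m - n).toNat = (m - 1 - n).toNat + 1 by omega, pow_succ]
        have hv1 : v (n - (m - 1)) = v 1 * v (n - m) := by rw [v_mul]; congr 1; ring
        rw [hv1]; ring
      · rw [if_neg (by omega : ¬ n ≤ m - 1), if_neg hle]; ring
    · rw [Int.not_even_iff_odd] at hm
      obtain ⟨b, hb⟩ := hm
      rw [if_neg (by rw [Int.even_iff]; omega)]
      by_cases hle : n ≤ m
      · rw [if_pos (by omega : n ≤ m + 1), if_pos hle]
        rw [show (m + 1 - n).toNat = (m - n).toNat + 1 by omega, pow_succ]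
        have hv1 : v (n - (m + 1)) = v (-1) * v (n - m) := by rw [v_mul]; congr 1; ring
        rw [hv1]; ring
      · rw [if_neg (by omega : ¬ n ≤ m + 1), if_neg hle]; ring
  · intro h
    obtain ⟨a, ha⟩ := h
    funext m
    simp only [Tact, sharp, Pi.smul_apply, Pi.add_apply, smul_eq_mul]
    by_cases hm : Even m
    · obtain ⟨b, hb⟩ := hm
      rw [if_pos ⟨b, hb⟩]
      rcases lt_trichotomy m n with hlt | heq | hgt
      · rw [if_neg (by omega : ¬ n ≤ m - 1), if_neg (by omega : ¬ n ≤ m), if_neg (by omega : ¬ n - 1 ≤ m),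
          if_neg (by omega : ¬ n + 1 ≤ m)]
        ring
      · subst heq
        rw [if_neg (by omega : ¬ m ≤ m - 1), if_pos le_rfl,
          if_pos (by omega : m - 1 ≤ m), if_neg (by omega : ¬ m + 1 ≤ m)]
        rw [show (m - m).toNat = 0 by omega, show (m - (m - 1)).toNat = 1 by omega,
          pow_zero, pow_one, show m - m = (0 : ℤ) by ring, v_zero]
        have hv1 : v (m - 1 - m) = v (-1) := by congr 1; ring
        rw [hv1]; ring
      · rw [if_pos (by omega : n ≤ m - 1), if_pos (by omega : n ≤ m), if_pos (by omega : n - 1 ≤ m),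
          if_pos (by omega : n + 1 ≤ m)]
        rw [show (m - n).toNat = (m - 1 - n).toNat + 1 by omega,
          show (m - (n - 1)).toNat = (m - 1 - n).toNat + 2 by omega,
          show (m - (n + 1)).toNat = (m - 1 - n).toNat by omega,
          pow_succ, pow_add]
        have hv1 : v (n - (m - 1)) = v 1 * v (n - m) := by rw [v_mul]; congr 1; ring
        have hv2 : v (n - 1 - m) = v (-1) * v (n - m) := by rw [v_mul]; congr 1; ring
        have hv3 : v (n + 1 - m) = v 1 * v (n - m) := by rw [v_mul]; congr 1; ring
        rw [hv1, hv2, hv3]; ring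
    · rw [Int.not_even_iff_odd] at hm
      obtain ⟨b, hb⟩ := hm
      rw [if_neg (by rw [Int.even_iff]; omega)]
      rcases lt_trichotomy m (n - 1) with hlt | heq | hgt
      · rw [if_neg (by omega : ¬ n ≤ m + 1), if_neg (by omega : ¬ n ≤ m),
          if_neg (by omega : ¬ n - 1 ≤ m), if_neg (by omega : ¬ n + 1 ≤ m)]
        ring
      · rw [if_pos (by omega : n ≤ m + 1), if_neg (by omega : ¬ n ≤ m),
          if_pos (by omega : n - 1 ≤ m), if_neg (by omega : ¬ n + 1 ≤ m)]
        rw [show (m + 1 - n).toNat = 0 by omega, show (m - (n - 1)).toNat = 0 by omega,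
          pow_zero, show n - (m + 1) = (0 : ℤ) by omega,
          show n - 1 - m = (0 : ℤ) by omega, v_zero]
        ring
      · rw [if_pos (by omega : n ≤ m + 1), if_pos (by omega : n ≤ m),
          if_pos (by omega : n - 1 ≤ m), if_pos (by omega : n + 1 ≤ m)]
        rw [show (m - n).toNat = (m - (n + 1)).toNat + 1 by omega,
          show (m + 1 - n).toNat = (m - (n + 1)).toNat + 2 by omega,
          show (m - (n - 1)).toNat = (m - (n + 1)).toNat + 2 by omega,
          pow_succ, pow_add]
        have hv1 : v (n - (m + 1)) = v (-1) * v (n - m) := by rw [v_mul]; congr 1; ring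
        have hv2 : v (n - 1 - m) = v (-1) * v (n - m) := by rw [v_mul]; congr 1; ring
        have hv3 : v (n + 1 - m) = v 1 * v (n - m) := by rw [v_mul]; congr 1; ring
        rw [hv1, hv2, hv3]; ring

end
end
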